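/- arXiv:2006.08464 — 10 statements merged into one kernel-verified Lean document; each statement's English description precedes it below -/
import Mathlib

section
/- Let W be a real m×n matrix with 1 < n ≤ m, with rows w_1,…,w_m. The map x ↦ ReLU(Wx) from ℝ^n to ℝ^m is injective if and only if W has a directed spanning set (DSS) of ℝ^n with respect to every x ∈ ℝ^n, i.e. for every x ∈ ℝ^n the set of rows {w_j : ⟨w_j, x⟩ ≥ 0} spans ℝ^n. -/
/-!
If `ReLU (W x) = ReLU (W y)`, then on every row with `⟨w_j, x + y⟩ ≥ 0` the pre-activations
`⟨w_j, x⟩` and `⟨w_j, y⟩` agree, because `max a 0 = max b 0` together with `a + b ≥ 0` forces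
`a = b`; if those rows span, `x - y = 0`. Conversely, if the rows with `⟨w_j, x⟩ ≥ 0` lie in a
hyperplane `v^⊥`, moving `x` a little along `v` leaves these rows' pre-activations unchanged and
keeps the others negative, so `x` and `x + t v` have the same image.
-/

/-- Componentwise ReLU applied to a vector. -/
noncomputable def relu {m : ℕ} (y : Fin m → ℝ) : Fin m → ℝ := fun j => max (y j) 0

/-- `W` has a directed spanning set (DSS) of `ℝ^n` with respect to `x` if the rows of `W`
having nonnegative inner product with `x` span `ℝ^n`. -/
def HasDSS {m n : ℕ} (W : Matrix (Fin m) (Fin n) ℝ) (x : Fin n → ℝ) : Prop :=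
  Submodule.span ℝ {w : Fin n → ℝ | ∃ j : Fin m, 0 ≤ dotProduct (W j) x ∧ W j = w} = ⊤

open Matrix Filter Topology

theorem eq_of_max_zero_eq_of_nonneg_add {a b : ℝ} (h : max a 0 = max b 0) (hab : 0 ≤ a + b) :
    a = b := by
  rcases max_cases a 0 with ⟨ha, ha'⟩ | ⟨ha, ha'⟩ <;>
    rcases max_cases b 0 with ⟨hb, hb'⟩ | ⟨hb, hb'⟩ <;> linarith

theorem eq_zero_of_forall_dotProduct_eq_zero_of_span_eq_top {K n : Type*} [CommSemiring K]
    [Fintype n] {s : Set (n → K)} (hs : Submodule.span K s = ⊤) {z : n → K}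
    (hz : ∀ w ∈ s, w ⬝ᵥ z = 0) : z = 0 := by
  refine dotProduct_eq_zero z fun w => ?_
  have hw : w ∈ LinearMap.ker (dotProductBilin K K z) :=
    Submodule.span_le.2 (fun u hu => by simpa [dotProduct_comm] using hz u hu)
      (hs ▸ Submodule.mem_top)
  simpa using hw

theorem exists_ne_zero_forall_dotProduct_eq_zero_of_span_ne_top {K n : Type*} [Field K]
    [Fintype n] [DecidableEq n] {s : Set (n → K)} (hs : Submodule.span K s ≠ ⊤) :
    ∃ v ≠ 0, ∀ w ∈ s, w ⬝ᵥ v = 0 := by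
  obtain ⟨φ, hφ0, hφs⟩ := Submodule.exists_dual_map_eq_bot_of_lt_top hs.lt_top inferInstance
  refine ⟨(dotProductEquiv K n).symm φ, by simpa using hφ0, fun w hw => ?_⟩
  have hφw : φ w = 0 := by
    simpa [hφs] using Submodule.mem_map_of_mem (f := φ) (Submodule.subset_span hw)
  rw [dotProduct_comm, ← dotProductEquiv_apply_apply, LinearEquiv.apply_symm_apply, hφw]

theorem exists_ne_zero_forall_add_mul_neg {ι : Type*} [Finite ι] (a b : ι → ℝ) :
    ∃ t ≠ 0, ∀ i, a i < 0 → a i + t * b i < 0 := by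
  have h : ∀ᶠ t in 𝓝 (0 : ℝ), ∀ i, a i < 0 → a i + t * b i < 0 := by
    refine eventually_all.2 fun i => ?_
    by_cases hi : a i < 0
    · refine (ContinuousAt.eventually_lt (g := fun _ => (0 : ℝ)) (by fun_prop) (by fun_prop)
        (by simpa using hi)).mono fun _ ht _ => ht
    · exact Eventually.of_forall fun _ h => absurd h hi
  obtain ⟨t, ht, ht0⟩ :=
    ((h.filter_mono nhdsWithin_le_nhds).and (self_mem_nhdsWithin (s := {0}ᶜ))).exists
  exact ⟨t, ht0, ht⟩

theorem injective_relu_mulVec_of_forall_hasDSS {m n : ℕ} {W : Matrix (Fin m) (Fin n) ℝ}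
    (h : ∀ x, HasDSS W x) : Function.Injective (fun x => relu (W *ᵥ x)) := by
  intro x y hxy
  rw [← sub_eq_zero]
  refine eq_zero_of_forall_dotProduct_eq_zero_of_span_eq_top (h (x + y)) ?_
  rintro _ ⟨j, hj, rfl⟩
  rw [dotProduct_sub, sub_eq_zero]
  exact eq_of_max_zero_eq_of_nonneg_add (congrFun hxy j) (by rwa [← dotProduct_add])

theorem hasDSS_of_injective_relu_mulVec {m n : ℕ} {W : Matrix (Fin m) (Fin n) ℝ}
    (hW : Function.Injective (fun x => relu (W *ᵥ x))) (x : Fin n → ℝ) : HasDSS W x := by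
  by_contra hx
  obtain ⟨v, hv0, hv⟩ := exists_ne_zero_forall_dotProduct_eq_zero_of_span_ne_top hx
  obtain ⟨t, ht0, ht⟩ := exists_ne_zero_forall_add_mul_neg (W · ⬝ᵥ x) (W · ⬝ᵥ v)
  have hsame : relu (W *ᵥ (x + t • v)) = relu (W *ᵥ x) := by
    funext j
    change max (W j ⬝ᵥ (x + t • v)) 0 = max (W j ⬝ᵥ x) 0
    rw [dotProduct_add, dotProduct_smul, smul_eq_mul]
    rcases lt_or_ge (W j ⬝ᵥ x) 0 with hneg | hnonneg
    · rw [max_eq_right (ht j hneg).le, max_eq_right hneg.le]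
    · rw [hv _ ⟨j, hnonneg, rfl⟩, mul_zero, add_zero]
  exact hv0 ((smul_eq_zero.1 (add_eq_left.1 (hW hsame))).resolve_left ht0)

theorem relu_layer_injective_iff_dss_general {m n : ℕ}
    (W : Matrix (Fin m) (Fin n) ℝ) :
    Function.Injective (fun x : Fin n → ℝ => relu (W.mulVec x)) ↔
      ∀ x : Fin n → ℝ, HasDSS W x :=
  ⟨hasDSS_of_injective_relu_mulVec, injective_relu_mulVec_of_forall_hasDSS⟩

/-- **Conditions for injectivity of `ReLU (W x)`**: for `1 < n ≤ m`, the map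
`x ↦ ReLU (W x)` is injective iff `W` has a DSS with respect to every `x ∈ ℝ^n`. -/
theorem relu_layer_injective_iff_dss {m n : ℕ} (hn : 1 < n) (hnm : n ≤ m)
    (W : Matrix (Fin m) (Fin n) ℝ) :
    Function.Injective (fun x : Fin n → ℝ => relu (W.mulVec x)) ↔
      ∀ x : Fin n → ℝ, HasDSS W x :=
  relu_layer_injective_iff_dss_general W
end

section
/- For any W ∈ ℝ^{m×n} with 1 < n, if m < 2n then the map x ↦ ReLU(Wx) from ℝ^n to ℝ^m is not injective. -/
lemma mulVec_zero_row {m n : ℕ} (W : Matrix (Fin m) (Fin n) ℝ) {j : Fin m}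
    (h : W j = 0) (x : Fin n → ℝ) : W.mulVec x j = 0 := by
  simp [Matrix.mulVec, h]

/-- Key lemma: if the ReLU layer is injective and `x0` avoids all kernel hyperplanes of the
nonzero rows, then at least `n` rows are positive at `x0`. -/
lemma key_card {m n : ℕ} {W : Matrix (Fin m) (Fin n) ℝ}
    (hinj : Function.Injective (fun x : Fin n → ℝ => relu (W.mulVec x)))
    (x0 : Fin n → ℝ) (hx0 : ∀ j, W j ≠ 0 → W.mulVec x0 j ≠ 0) :
    n ≤ (Finset.univ.filter (fun j => 0 < W.mulVec x0 j)).card := by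
  classical
  set P := Finset.univ.filter (fun j => 0 < W.mulVec x0 j) with hP
  -- the linear map x ↦ (W x)|_P
  let L : (Fin n → ℝ) →ₗ[ℝ] ({ j // j ∈ P } → ℝ) :=
    (LinearMap.funLeft ℝ ℝ (fun j : { j // j ∈ P } => (j : Fin m))).comp W.mulVecLin
  have hLinj : Function.Injective L := by
    rw [← LinearMap.ker_eq_bot, LinearMap.ker_eq_bot']
    intro v hv
    -- v satisfies W.mulVec v j = 0 for all j ∈ P
    have hv' : ∀ j ∈ P, W.mulVec v j = 0 := by
      intro j hj
      have := congrFun hv ⟨j, hj⟩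
      simpa [L, LinearMap.funLeft] using this
    -- choose a small nonzero t
    have hev : ∀ᶠ t : ℝ in nhds 0, ∀ j : Fin m,
        W.mulVec x0 j < 0 → W.mulVec x0 j + t * W.mulVec v j < 0 := by
      rw [Filter.eventually_all]
      intro j
      by_cases hj : W.mulVec x0 j < 0
      · have hc : ContinuousAt (fun t : ℝ => W.mulVec x0 j + t * W.mulVec v j) 0 := by
          fun_prop
        have h0 : (fun t : ℝ => W.mulVec x0 j + t * W.mulVec v j) 0 < 0 := by simpa using hj
        filter_upwards [hc (Iio_mem_nhds h0)] with t ht _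
        exact ht
      · filter_upwards with t ht; exact absurd ht hj
    have : ∃ t : ℝ, t ≠ 0 ∧ ∀ j : Fin m,
        W.mulVec x0 j < 0 → W.mulVec x0 j + t * W.mulVec v j < 0 := by
      have hne : ∀ᶠ t : ℝ in nhdsWithin 0 {(0:ℝ)}ᶜ, t ≠ 0 := by
        filter_upwards [self_mem_nhdsWithin] with t ht
        exact ht
      obtain ⟨t, ht1, ht2⟩ :=
        (hne.and (hev.filter_mono (nhdsWithin_le_nhds (s := {(0:ℝ)}ᶜ)))).exists
      exact ⟨t, ht1, ht2⟩
    obtain ⟨t, ht0, ht⟩ := this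
    have key : W.mulVec (x0 + t • v) = W.mulVec x0 + t • W.mulVec v := by
      rw [Matrix.mulVec_add, Matrix.mulVec_smul]
    have heq : relu (W.mulVec (x0 + t • v)) = relu (W.mulVec x0) := by
      funext j
      have hmv : W.mulVec (x0 + t • v) j = W.mulVec x0 j + t * W.mulVec v j := by
        rw [key]; simp [Pi.add_apply, Pi.smul_apply, smul_eq_mul]
      rcases lt_trichotomy (W.mulVec x0 j) 0 with h | h | h
      · have h1 := ht j h
        simp only [relu, hmv]
        rw [max_eq_right (le_of_lt h1), max_eq_right (le_of_lt h)]
      · have hWj : W j = 0 := by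
          by_contra hne
          exact hx0 j hne h
        simp only [relu, hmv, mulVec_zero_row W hWj]
        ring_nf
      · have hjP : j ∈ P := by simp [hP, h]
        have := hv' j hjP
        simp only [relu, hmv, this]
        ring_nf
    have := hinj heq
    have htv : t • v = 0 := by
      have := congrArg (· - x0) this
      simpa [add_sub_cancel_left] using this
    exact (smul_eq_zero.mp htv).resolve_left ht0
  have := LinearMap.finrank_le_finrank_of_injective hLinj
  simpa [Module.finrank_fintype_fun_eq_card, Fintype.card_coe] using this

/-- **Minimal expansivity (necessity)**: if `m < 2 n` (with `1 < n`), then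
`x ↦ ReLU (W x)` is not injective. -/
theorem relu_layer_not_injective_of_lt_two_expansive {m n : ℕ} (hn : 1 < n) (hm : m < 2 * n)
    (W : Matrix (Fin m) (Fin n) ℝ) :
    ¬ Function.Injective (fun x : Fin n → ℝ => relu (W.mulVec x)) := by
  classical
  intro hinj
  -- find x0 avoiding the kernel hyperplanes of nonzero rows
  haveI : Nonempty (Fin n) := ⟨⟨0, by omega⟩⟩
  obtain ⟨x0, hx0⟩ : ∃ x0 : Fin n → ℝ, ∀ j, W j ≠ 0 → W.mulVec x0 j ≠ 0 := by
    by_contra h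
    push_neg at h
    set p : Fin m → Subspace ℝ (Fin n → ℝ) := fun j =>
      if W j = 0 then ⊥ else LinearMap.ker ((LinearMap.proj j).comp W.mulVecLin) with hp
    have hcov : ⋃ j, (p j : Set (Fin n → ℝ)) = Set.univ := by
      ext x
      simp only [Set.mem_iUnion, Set.mem_univ, iff_true]
      obtain ⟨j, hjne, hjz⟩ := h x
      exact ⟨j, by simp [hp, hjne, LinearMap.mem_ker, hjz]⟩
    obtain ⟨j, hj⟩ := Subspace.exists_eq_top_of_iUnion_eq_univ hcov
    by_cases hWj : W j = 0
    · rw [hp] at hj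
      simp only [hWj, if_true, if_pos rfl] at hj
      exact absurd hj.symm top_ne_bot
    · rw [hp] at hj
      simp only [hWj, if_false] at hj
      have : W.mulVec (W j) j = 0 := by
        have : W j ∈ LinearMap.ker ((LinearMap.proj j).comp W.mulVecLin) := by
          rw [hj]; trivial
        simpa using this
      have hdot : W.mulVec (W j) j = ∑ k, W j k * W j k := by
        simp [Matrix.mulVec, dotProduct]
      rw [hdot] at this
      have : ∀ k, W j k = 0 := by
        intro k
        have hnn : ∀ k ∈ Finset.univ, (0:ℝ) ≤ W j k * W j k := fun k _ => mul_self_nonneg _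
        have := (Finset.sum_eq_zero_iff_of_nonneg hnn).mp this k (Finset.mem_univ k)
        exact mul_self_eq_zero.mp this
      exact hWj (funext this)
  -- count positive rows at x0 and at -x0
  have h1 := key_card hinj x0 hx0
  have hx0' : ∀ j, W j ≠ 0 → W.mulVec (-x0) j ≠ 0 := by
    intro j hj
    rw [Matrix.mulVec_neg]
    simpa using hx0 j hj
  have h2 := key_card hinj (-x0) hx0'
  have hneg : (Finset.univ.filter (fun j => 0 < W.mulVec (-x0) j)) =
      (Finset.univ.filter (fun j => W.mulVec x0 j < 0)) := by
    ext j
    simp [Matrix.mulVec_neg]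
  rw [hneg] at h2
  have hdisj : Disjoint (Finset.univ.filter (fun j => 0 < W.mulVec x0 j))
      (Finset.univ.filter (fun j => W.mulVec x0 j < 0)) := by
    rw [Finset.disjoint_filter]
    intro j _ h1' h2'
    exact absurd h1' (not_lt.mpr (le_of_lt h2'))
  have hcard := Finset.card_union_of_disjoint hdisj
  have hle : ((Finset.univ.filter (fun j => 0 < W.mulVec x0 j)) ∪
      (Finset.univ.filter (fun j => W.mulVec x0 j < 0))).card ≤ m :=
    (Finset.card_le_univ _).trans_eq (by simp)
  omega
end

section
/- Let W ∈ ℝ^{2n×n} with 1 < n be such that x ↦ ReLU(Wx) is injective (equivalently, W has a directed spanning set of ℝ^n with respect to every x ∈ ℝ^n). Then there exist a permutation of the rows of W, an invertible matrix B ∈ ℝ^{n×n}, and a diagonal matrix D ∈ ℝ^{n×n} with strictly positive diagonal entries, such that after the row permutation W equals the block matrix [B; −DB] (the first n rows are B and the last n rows are −DB). -/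
/-!
Injectivity of `x ↦ relu (W x)` forces a directed spanning set at every `x`: otherwise some
`v ≠ 0` is orthogonal to all rows with `⟨w_j, x⟩ ≥ 0`, and moving `x` slightly along `v` does
not change `relu (W x)`. At a point `x` where no row vanishes, the rows positive at `x` and
those positive at `-x` then both span, so with `2n` rows each set has exactly `n` elements
(this also rules out zero rows). Crossing the hyperplane `w_j^⊥` at a point where only multiples
of `w_j` vanish moves the positive multiples of `w_j` into the positive set and the negative
multiples out of it, so every row has a negative multiple among the rows. The `n` rows positive
at a generic point form a basis, and their negative multiples are the remaining `n` rows.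
-/

open Matrix Filter Topology Finset

theorem exists_ne_zero_forall_dotProduct_eq_zero {K ι : Type*} [Field K] [Fintype ι]
    [DecidableEq ι] {s : Set (ι → K)} (hs : Submodule.span K s ≠ ⊤) :
    ∃ v ≠ 0, ∀ u ∈ s, u ⬝ᵥ v = 0 := by
  obtain ⟨f, hf, hle⟩ := (Submodule.span K s).exists_le_ker_of_lt_top hs.lt_top
  refine ⟨(dotProductEquiv K ι).symm f, ?_, fun u hu => ?_⟩
  · simpa using hf
  · rw [dotProduct_comm, ← dotProductEquiv_apply_apply, LinearEquiv.apply_symm_apply]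
    exact hle (Submodule.subset_span hu)

theorem exists_forall_dotProduct_ne_zero {ι : Type*} [Finite ι] {n : ℕ} (u : ι → Fin n → ℝ) :
    ∃ x, ∀ k, u k ≠ 0 → u k ⬝ᵥ x ≠ 0 := by
  have : Fintype {k // u k ≠ 0} := Fintype.ofFinite _
  obtain ⟨x, -, hx⟩ := Set.exists_of_ssubset <|
    Submodule.iUnion_ssubset_of_forall_ne_top_of_card_lt univ
      (fun k : {k // u k ≠ 0} => LinearMap.ker (dotProductEquiv ℝ (Fin n) (u k)))
      (fun k htop => k.2 <| (dotProductEquiv ℝ (Fin n)).map_eq_zero_iff.mp <|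
        LinearMap.ker_eq_top.mp htop)
      (by simp)
  refine ⟨x, fun k hk hkx => hx ?_⟩
  simp only [Set.mem_iUnion]
  exact ⟨⟨k, hk⟩, mem_univ _, hkx⟩

theorem dotProduct_self_pos {n : ℕ} {v : Fin n → ℝ} (hv : v ≠ 0) : 0 < v ⬝ᵥ v := by
  simpa using dotProduct_self_star_pos_iff.mpr hv

theorem exists_orthogonal_dotProduct_ne_zero {ι : Type*} [Finite ι] {n : ℕ} {v : Fin n → ℝ}
    (hv : v ≠ 0) (u : ι → Fin n → ℝ) :
    ∃ y, v ⬝ᵥ y = 0 ∧ ∀ k, (∀ c : ℝ, u k ≠ c • v) → u k ⬝ᵥ y ≠ 0 := by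
  have hvv := (dotProduct_self_pos hv).ne'
  obtain ⟨x, hx⟩ := exists_forall_dotProduct_ne_zero fun k => u k - (u k ⬝ᵥ v / v ⬝ᵥ v) • v
  refine ⟨x - (v ⬝ᵥ x / v ⬝ᵥ v) • v, ?_, fun k hk => ?_⟩
  · rw [dotProduct_sub, dotProduct_smul, smul_eq_mul, div_mul_cancel₀ _ hvv, sub_self]
  · convert hx k (sub_ne_zero.mpr (hk _)) using 1
    simp only [dotProduct_sub, sub_dotProduct, dotProduct_smul, smul_dotProduct, smul_eq_mul,
      dotProduct_comm v x]
    ring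

theorem exists_pos_of_eventually_nhds_zero {p : ℝ → Prop} (h : ∀ᶠ t in 𝓝 0, p t) :
    ∃ t > 0, p t ∧ p (-t) := by
  obtain ⟨ε, hε, hp⟩ := Metric.eventually_nhds_iff.mp h
  refine ⟨ε / 2, half_pos hε, hp ?_, hp ?_⟩ <;>
    simp [abs_of_pos hε, half_lt_self hε]

section Rows

variable {m n : ℕ} (W : Matrix (Fin m) (Fin n) ℝ)

def HasDirectedSpanningSet (x : Fin n → ℝ) : Prop :=
  Submodule.span ℝ (Set.range fun j : {j // 0 ≤ W j ⬝ᵥ x} => W j) = ⊤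

noncomputable def posRows (x : Fin n → ℝ) : Finset (Fin m) := {j | 0 < W j ⬝ᵥ x}

theorem eventually_forall_mul_dotProduct_add_smul_pos (x v : Fin n → ℝ) :
    ∀ᶠ t in 𝓝 (0 : ℝ), ∀ j, W j ⬝ᵥ x ≠ 0 → 0 < (W j ⬝ᵥ x) * (W j ⬝ᵥ (x + t • v)) :=
  eventually_all.mpr fun j => eventually_imp_distrib_left.mpr fun hj => by
    have hcont : Tendsto (fun t : ℝ => (W j ⬝ᵥ x) * (W j ⬝ᵥ x + t * (W j ⬝ᵥ v))) (𝓝 0)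
        (𝓝 ((W j ⬝ᵥ x) * (W j ⬝ᵥ x))) := by
      simpa using (Continuous.tendsto (by fun_prop) 0 :
        Tendsto (fun t : ℝ => (W j ⬝ᵥ x) * (W j ⬝ᵥ x + t * (W j ⬝ᵥ v))) _ _)
    simpa only [dotProduct_add, dotProduct_smul, smul_eq_mul] using
      hcont.eventually (lt_mem_nhds (mul_self_pos.mpr hj))

variable {W}

theorem hasDirectedSpanningSet_of_injective_relu
    (hinj : Function.Injective fun x : Fin n → ℝ => relu (W *ᵥ x)) (x : Fin n → ℝ) :
    HasDirectedSpanningSet W x := by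
  by_contra hspan
  obtain ⟨v, hv, hvW⟩ := exists_ne_zero_forall_dotProduct_eq_zero hspan
  obtain ⟨t, ht0, ht, -⟩ :=
    exists_pos_of_eventually_nhds_zero (eventually_forall_mul_dotProduct_add_smul_pos W x v)
  have hrelu : relu (W *ᵥ (x + t • v)) = relu (W *ᵥ x) := by
    funext j
    simp only [relu, mulVec]
    rcases le_or_gt 0 (W j ⬝ᵥ x) with hj | hj
    · rw [dotProduct_add, dotProduct_smul, hvW _ ⟨⟨j, hj⟩, rfl⟩, smul_zero, add_zero]
    · rw [max_eq_right hj.le, max_eq_right (neg_of_mul_pos_right (ht j hj.ne) hj.le).le]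
  exact smul_ne_zero ht0.ne' hv (add_eq_left.mp (hinj hrelu))

variable {x : Fin n → ℝ}

theorem span_posRows_eq_top (h : HasDirectedSpanningSet W x)
    (hx : ∀ j, W j ≠ 0 → W j ⬝ᵥ x ≠ 0) :
    Submodule.span ℝ (Set.range fun j : posRows W x => W j) = ⊤ := by
  rw [eq_top_iff, ← h, ← Submodule.span_sdiff_singleton_zero]
  refine Submodule.span_mono ?_
  rintro _ ⟨⟨⟨j, hj⟩, rfl⟩, hj0⟩
  exact ⟨⟨j, by simpa [posRows] using lt_of_le_of_ne' hj (hx j hj0)⟩, rfl⟩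

theorem le_card_posRows (h : HasDirectedSpanningSet W x)
    (hx : ∀ j, W j ≠ 0 → W j ⬝ᵥ x ≠ 0) : n ≤ #(posRows W x) :=
  calc n = Module.finrank ℝ (Submodule.span ℝ (Set.range fun j : posRows W x => W j)) := by
        rw [span_posRows_eq_top h hx, finrank_top, Module.finrank_fin_fun]
    _ ≤ #(posRows W x) := by
        simpa [Set.finrank] using finrank_range_le_card (R := ℝ) fun j : posRows W x => W j

theorem card_posRows_add_card_posRows_neg (x : Fin n → ℝ) :
    #(posRows W x) + #(posRows W (-x)) = #{j | W j ⬝ᵥ x ≠ 0} := by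
  rw [← card_union_of_disjoint]
  · congr 1
    ext j
    simp only [posRows, mem_union, mem_filter, mem_univ, true_and, dotProduct_neg, neg_pos]
    exact or_comm.trans ne_iff_lt_or_gt.symm
  · exact disjoint_filter.mpr fun j _ hpos hneg => by
      rw [dotProduct_neg] at hneg
      linarith

theorem exists_neg_smul_row_of_card_posRows_eq (hW : ∀ j, W j ≠ 0) {c : ℕ}
    (hc : ∀ x, (∀ j, W j ⬝ᵥ x ≠ 0) → #(posRows W x) = c) (j : Fin m) :
    ∃ k, ∃ d : ℝ, 0 < d ∧ W k = -(d • W j) := by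
  by_contra! hneg
  obtain ⟨y, hyj, hy⟩ := exists_orthogonal_dotProduct_ne_zero (hW j) fun k => W k
  have hpar : ∀ k, W k ⬝ᵥ y = 0 → 0 < W k ⬝ᵥ W j := by
    intro k hk
    obtain ⟨d, hd⟩ : ∃ d : ℝ, W k = d • W j := by simpa using mt (hy k) (not_not.mpr hk)
    rw [hd, smul_dotProduct, smul_eq_mul]
    refine mul_pos ?_ (dotProduct_self_pos (hW j))
    rcases lt_trichotomy d 0 with hd0 | rfl | hd0
    · exact absurd (by rw [hd, neg_smul, neg_neg]) (hneg k (-d) (neg_pos.mpr hd0))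
    · exact absurd (by rw [hd, zero_smul]) (hW k)
    · exact hd0
  obtain ⟨t, ht, htp, htm⟩ :=
    exists_pos_of_eventually_nhds_zero (eventually_forall_mul_dotProduct_add_smul_pos W y (W j))
  have hval : ∀ k s, W k ⬝ᵥ (y + s • W j) = W k ⬝ᵥ y + s * (W k ⬝ᵥ W j) := fun k s => by
    rw [dotProduct_add, dotProduct_smul, smul_eq_mul]
  have key : ∀ k, W k ⬝ᵥ (y + t • W j) ≠ 0 ∧ W k ⬝ᵥ (y + (-t) • W j) ≠ 0 ∧
      (0 < W k ⬝ᵥ (y + (-t) • W j) → 0 < W k ⬝ᵥ (y + t • W j)) := by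
    intro k
    rcases eq_or_ne (W k ⬝ᵥ y) 0 with h0 | h0
    · have := hpar k h0
      rw [hval, hval, h0, zero_add, zero_add]
      exact ⟨by positivity, by nlinarith, fun h => by nlinarith⟩
    · have h1 := htp k h0
      have h2 := htm k h0
      exact ⟨right_ne_zero_of_mul h1.ne', right_ne_zero_of_mul h2.ne',
        fun h => pos_of_mul_pos_right h1 (pos_of_mul_pos_left h2 h.le).le⟩
  -- crossing `(W j)^⊥` at `y` only adds rows, namely the positive multiples of `W j`
  have hssub : posRows W (y + (-t) • W j) ⊂ posRows W (y + t • W j) := by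
    have hjj := dotProduct_self_pos (hW j)
    refine (ssubset_iff_of_subset fun k hk => ?_).mpr ⟨j, ?_, ?_⟩
    · simp only [posRows, mem_filter, mem_univ, true_and] at hk ⊢
      exact (key k).2.2 hk
    · simpa [posRows, hval, hyj] using mul_pos ht hjj
    · simpa [posRows, hval, hyj] using (mul_pos ht hjj).le
  have := card_lt_card hssub
  rw [hc _ fun k => (key k).2.1, hc _ fun k => (key k).1] at this
  exact lt_irrefl _ this

end Rows

section SquareHalves

variable {n : ℕ} {W : Matrix (Fin (n + n)) (Fin n) ℝ}

theorem row_ne_zero_of_forall_hasDirectedSpanningSet (h : ∀ x, HasDirectedSpanningSet W x)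
    (j : Fin (n + n)) : W j ≠ 0 := by
  intro hj
  obtain ⟨x, hx⟩ := exists_forall_dotProduct_ne_zero fun k => W k
  have hpos := le_card_posRows (h x) hx
  have hneg := le_card_posRows (h (-x)) (by simpa [dotProduct_neg] using hx)
  have hsub : ({k | W k ⬝ᵥ x ≠ 0} : Finset _) ⊆ univ.erase j :=
    fun k hk => mem_erase.mpr ⟨by rintro rfl; simp_all, mem_univ k⟩
  have hcard := card_le_card hsub
  rw [← card_posRows_add_card_posRows_neg, card_erase_of_mem (mem_univ j), card_univ,
    Fintype.card_fin] at hcard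
  have := j.is_lt
  omega

theorem card_posRows_eq (h : ∀ x, HasDirectedSpanningSet W x) {x : Fin n → ℝ}
    (hx : ∀ j, W j ⬝ᵥ x ≠ 0) : #(posRows W x) = n := by
  have hpos := le_card_posRows (h x) fun j _ => hx j
  have hneg := le_card_posRows (h (-x)) (by simpa [dotProduct_neg] using fun j _ => hx j)
  have := card_posRows_add_card_posRows_neg (W := W) x
  rw [filter_true_of_mem fun j _ => hx j, card_univ, Fintype.card_fin] at this
  omega

end SquareHalves

theorem LinearIndependent.ne_neg_smul {ι M : Type*} [AddCommGroup M] [Module ℝ M]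
    {v : ι → M} (hv : LinearIndependent ℝ v) {c : ℝ} (hc : 0 < c) (i j : ι) :
    v i ≠ -(c • v j) := by
  intro h
  obtain rfl : i = j :=
    hv.eq_of_smul_apply_eq_smul_apply 1 (-c) i j one_ne_zero (by simpa using h)
  have : (1 + c) • v i = 0 := by rw [add_smul, one_smul, ← sub_neg_eq_add, ← h, sub_self]
  exact hv.ne_zero i ((smul_eq_zero.mp this).resolve_left (by linarith))

theorem injective_sum_elim_of_linearIndependent {ι κ M : Type*} [AddCommGroup M] [Module ℝ M]
    {w : κ → M} {f g : ι → κ} {d : ι → ℝ} (hli : LinearIndependent ℝ (w ∘ f))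
    (hd : ∀ i, 0 < d i) (hg : ∀ i, w (g i) = -(d i • w (f i))) :
    Function.Injective (Sum.elim f g) := by
  rintro (i | i) (i' | i') h <;> simp only [Sum.elim_inl, Sum.elim_inr, Sum.inl.injEq,
    Sum.inr.injEq, reduceCtorEq] at h ⊢
  · exact hli.injective (congrArg w h)
  · exact hli.ne_neg_smul (hd i') i i' (by simp [h, hg])
  · exact hli.ne_neg_smul (hd i) i' i (by simp [← h, hg])
  · exact hli.eq_of_smul_apply_eq_smul_apply (d i) (d i') i i' (hd i).ne'
      (neg_injective (by simpa [hg] using congrArg w h))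

theorem minimally_expansive_injective_structure_general {n : ℕ}
    (W : Matrix (Fin (n + n)) (Fin n) ℝ)
    (hinj : Function.Injective (fun x : Fin n → ℝ => relu (W.mulVec x))) :
    ∃ (σ : Equiv.Perm (Fin (n + n))) (B : Matrix (Fin n) (Fin n) ℝ) (d : Fin n → ℝ),
      IsUnit B ∧ (∀ i, 0 < d i) ∧
      (∀ i : Fin n, W (σ (Fin.castAdd n i)) = B i) ∧
      (∀ i : Fin n, W (σ (Fin.natAdd n i)) = -(d i • B i)) := by
  have hdss := hasDirectedSpanningSet_of_injective_relu hinj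
  have hW := row_ne_zero_of_forall_hasDirectedSpanningSet hdss
  have hcard : ∀ x, (∀ j, W j ⬝ᵥ x ≠ 0) → #(posRows W x) = n := fun _ => card_posRows_eq hdss
  choose g d hd hg using exists_neg_smul_row_of_card_posRows_eq hW hcard
  obtain ⟨x, hx⟩ := exists_forall_dotProduct_ne_zero fun j => W j
  have hx' : ∀ j, W j ⬝ᵥ x ≠ 0 := fun j => hx j (hW j)
  set f := (posRows W x).orderEmbOfFin (hcard x hx')
  have hli : LinearIndependent ℝ fun i => W (f i) := by
    refine linearIndependent_of_top_le_span_of_card_eq_finrank ?_ (by simp)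
    rw [← span_posRows_eq_top (hdss x) fun j _ => hx' j]
    refine Submodule.span_mono ?_
    rintro _ ⟨⟨j, hj⟩, rfl⟩
    obtain ⟨i, rfl⟩ : j ∈ Set.range f := by rwa [range_orderEmbOfFin]
    exact ⟨i, rfl⟩
  have hbij : Function.Bijective (Sum.elim f (g ∘ f)) :=
    (Fintype.bijective_iff_injective_and_card _).mpr
      ⟨injective_sum_elim_of_linearIndependent (w := W) hli (fun i => hd (f i))
        fun i => hg (f i), by simp⟩
  refine ⟨finSumFinEquiv.symm.trans (Equiv.ofBijective _ hbij), Matrix.of fun i => W (f i),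
    fun i => d (f i), Matrix.linearIndependent_rows_iff_isUnit.mp hli, fun i => hd (f i),
    fun i => by rw [Equiv.trans_apply, finSumFinEquiv_symm_apply_castAdd]; rfl,
    fun i => by rw [Equiv.trans_apply, finSumFinEquiv_symm_apply_natAdd]; exact hg (f i)⟩

/-- **Structure of minimally expansive injective ReLU layers**: if `W ∈ ℝ^{2n×n}` (with
`1 < n`) yields an injective ReLU layer, then up to a permutation of the rows, `W` has the
block form `[B ; -D B]` with `B` invertible and `D` diagonal with strictly positive entries. -/
theorem minimally_expansive_injective_structure {n : ℕ} (hn : 1 < n)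
    (W : Matrix (Fin (n + n)) (Fin n) ℝ)
    (hinj : Function.Injective (fun x : Fin n → ℝ => relu (W.mulVec x))) :
    ∃ (σ : Equiv.Perm (Fin (n + n))) (B : Matrix (Fin n) (Fin n) ℝ) (d : Fin n → ℝ),
      IsUnit B ∧ (∀ i, 0 < d i) ∧
      (∀ i : Fin n, W (σ (Fin.castAdd n i)) = B i) ∧
      (∀ i : Fin n, W (σ (Fin.natAdd n i)) = -(d i • B i)) :=
  minimally_expansive_injective_structure_general W hinj
end

section
/- Let W ∈ ℝ^{m×n} have a directed spanning set of ℝ^n with respect to every x ∈ ℝ^n. Let σ ≥ 0 be such that for every x ∈ ℝ^n and every z ∈ ℝ^n, ‖W|_{S(x,W)} z‖₂ ≥ σ‖z‖₂ (i.e. σ is a lower bound on the smallest singular value of every restricted matrix W|_{S(x,W)}). Then for all x₀, x₁ ∈ ℝ^n: ‖ReLU(W x₀) − ReLU(W x₁)‖₂ ≥ (σ/√(2m))·‖x₀ − x₁‖₂. -/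
/-- The restricted matrix `W|_{S(x,W)}`: the `j`-th row equals the `j`-th row of `W` when
`⟨w_j, x⟩ ≥ 0` and is the zero row otherwise. -/
noncomputable def restrDSS {m n : ℕ} (W : Matrix (Fin m) (Fin n) ℝ) (x : Fin n → ℝ) :
    Matrix (Fin m) (Fin n) ℝ :=
  fun j => if 0 ≤ dotProduct (W j) x then W j else 0

/-- Euclidean norm of a vector, written as the square root of the sum of squares. -/
noncomputable def enorm {ι : Type*} [Fintype ι] (v : ι → ℝ) : ℝ :=
  Real.sqrt (∑ i, v i ^ 2)

lemma sq_sub_le_four_mul_sq_max_sub_max {a b : ℝ} (h : 0 ≤ a + b) :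
    (a - b) ^ 2 ≤ 4 * (max a 0 - max b 0) ^ 2 := by
  rcases le_or_gt 0 a with ha | ha <;> rcases le_or_gt 0 b with hb | hb
  · rw [max_eq_left ha, max_eq_left hb]; nlinarith
  · rw [max_eq_left ha, max_eq_right hb.le]; nlinarith
  · rw [max_eq_right ha.le, max_eq_left hb]; nlinarith
  · nlinarith

lemma enorm_le_mul_of_sq_le_sq_mul {ι : Type*} [Fintype ι] {u v : ι → ℝ} {c : ℝ} (hc : 0 ≤ c)
    (h : ∀ i, u i ^ 2 ≤ c ^ 2 * v i ^ 2) : _root_.enorm u ≤ c * _root_.enorm v := by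
  unfold _root_.enorm
  calc √(∑ i, u i ^ 2) ≤ √(c ^ 2 * ∑ i, v i ^ 2) := by
        rw [Finset.mul_sum]
        exact Real.sqrt_le_sqrt (Finset.sum_le_sum fun i _ => h i)
    _ = c * √(∑ i, v i ^ 2) := by rw [Real.sqrt_mul (sq_nonneg c), Real.sqrt_sq hc]

section Restriction

open Matrix

variable {m n : ℕ} (W : Matrix (Fin m) (Fin n) ℝ)

lemma sq_restrDSS_add_mulVec_sub_le (x₀ x₁ : Fin n → ℝ) (j : Fin m) :
    (restrDSS W (x₀ + x₁) *ᵥ (x₀ - x₁)) j ^ 2 ≤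
      2 ^ 2 * (relu (W *ᵥ x₀) - relu (W *ᵥ x₁)) j ^ 2 := by
  simp only [Matrix.mulVec, restrDSS, relu, Pi.sub_apply]
  split_ifs with hj
  · rw [dotProduct_add] at hj
    rw [dotProduct_sub]
    linarith [sq_sub_le_four_mul_sq_max_sub_max hj]
  · rw [zero_dotProduct, zero_pow two_ne_zero]
    positivity

lemma enorm_restrDSS_add_mulVec_sub_le (x₀ x₁ : Fin n → ℝ) :
    _root_.enorm (restrDSS W (x₀ + x₁) *ᵥ (x₀ - x₁)) ≤
      2 * _root_.enorm (relu (W *ᵥ x₀) - relu (W *ᵥ x₁)) :=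
  enorm_le_mul_of_sq_le_sq_mul zero_le_two (sq_restrDSS_add_mulVec_sub_le W x₀ x₁)

lemma restrDSS_neg_row_self (j : Fin m) : restrDSS W (-W j) j = 0 := by
  by_cases hw : W j = 0
  · simp [restrDSS, hw]
  · obtain ⟨i, hi⟩ := Function.ne_iff.mp hw
    have hpos : 0 < dotProduct (W j) (W j) := by
      simpa [dotProduct, ← sq] using Finset.sum_pos' (fun i _ => sq_nonneg (W j i))
        ⟨i, Finset.mem_univ i, sq_pos_of_ne_zero hi⟩
    simp [restrDSS, hpos]

lemma exists_restrDSS_eq_zero (hm : m ≤ 1) : ∃ x, restrDSS W x = 0 := by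
  interval_cases m
  · exact ⟨0, funext fun j => j.elim0⟩
  · exact ⟨-W 0, funext fun j => Fin.eq_zero j ▸ restrDSS_neg_row_self W 0⟩

end Restriction

theorem relu_layer_inverse_lipschitz_general {m n : ℕ} (W : Matrix (Fin m) (Fin n) ℝ)
    (σ : ℝ)
    (hsv : ∀ x z : Fin n → ℝ, σ * _root_.enorm z ≤ _root_.enorm ((restrDSS W x).mulVec z)) :
    ∀ x₀ x₁ : Fin n → ℝ,
      σ / Real.sqrt (2 * m) * _root_.enorm (x₀ - x₁) ≤
        _root_.enorm (relu (W.mulVec x₀) - relu (W.mulVec x₁)) := by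
  intro x₀ x₁
  have hc : 0 ≤ _root_.enorm (relu (W.mulVec x₀) - relu (W.mulVec x₁)) := Real.sqrt_nonneg _
  rw [div_mul_eq_mul_div]
  rcases le_or_gt m 1 with hm | hm
  · obtain ⟨x, hx⟩ := exists_restrDSS_eq_zero W hm
    have h0 : σ * _root_.enorm (x₀ - x₁) ≤ 0 := by
      simpa [hx, _root_.enorm] using hsv x (x₀ - x₁)
    exact (div_nonpos_of_nonpos_of_nonneg h0 (Real.sqrt_nonneg _)).trans hc
  · have hkey : σ * _root_.enorm (x₀ - x₁) ≤
        2 * _root_.enorm (relu (W.mulVec x₀) - relu (W.mulVec x₁)) :=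
      (hsv (x₀ + x₁) (x₀ - x₁)).trans (enorm_restrDSS_add_mulVec_sub_le W x₀ x₁)
    have h2 : (2 : ℝ) ≤ √(2 * m) := by
      rw [Real.le_sqrt zero_le_two (by positivity)]
      have : (2 : ℝ) ≤ m := by exact_mod_cast hm
      linarith
    rw [div_le_iff₀ (by linarith)]
    linarith [mul_le_mul_of_nonneg_left h2 hc]

/-- **Global inverse Lipschitz constant**: if `W` has a DSS with respect to every `x` and
`σ ≥ 0` is a lower bound on the smallest singular value of every restricted matrix
`W|_{S(x,W)}`, then `‖ReLU(Wx₀) − ReLU(Wx₁)‖₂ ≥ (σ/√(2m))·‖x₀ − x₁‖₂`. -/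
theorem relu_layer_inverse_lipschitz {m n : ℕ} (W : Matrix (Fin m) (Fin n) ℝ)
    (hDSS : ∀ x : Fin n → ℝ,
      Submodule.span ℝ
        {w : Fin n → ℝ | ∃ j, 0 ≤ dotProduct (W j) x ∧ W j = w} = ⊤)
    (σ : ℝ) (hσ : 0 ≤ σ)
    (hsv : ∀ x z : Fin n → ℝ, σ * _root_.enorm z ≤ _root_.enorm ((restrDSS W x).mulVec z)) :
    ∀ x₀ x₁ : Fin n → ℝ,
      σ / Real.sqrt (2 * m) * _root_.enorm (x₀ - x₁) ≤
        _root_.enorm (relu (W.mulVec x₀) - relu (W.mulVec x₁)) :=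
  relu_layer_inverse_lipschitz_general W σ hsv
end

section
/- Suppose ℝ^n is spanned by the union of linear subspaces Ω_1,…,Ω_K, and for each k = 1,…,K we are given a finite family of vectors W_k = {w_{k,1},…,w_{k,N_k}} with each w_{k,ℓ} ∈ Ω_k, such that for every x ∈ Ω_k the set {w_{k,ℓ} : ⟨w_{k,ℓ}, x⟩ ≥ 0} spans Ω_k (W_k has a DSS of Ω_k with respect to every x ∈ Ω_k). Let W be the matrix obtained by stacking all rows of W_1,…,W_K. Then for every x ∈ ℝ^n the set of rows of W having nonnegative inner product with x spans ℝ^n, i.e. W has a DSS of ℝ^n with respect to every x ∈ ℝ^n. -/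
/-!
For `w ∈ Ω_k` the sign of `⟨w, x⟩` only depends on the orthogonal projection `y` of `x` onto
`Ω_k`, so the vectors of `W_k` selected by `x` are those selected by `y ∈ Ω_k`, which span `Ω_k`.
Hence the vectors of `W` selected by `x` span every `Ω_k`, and so all of `ℝ^n`.
-/

/-- The dot product is nondegenerate on `Ω`; `y` is the orthogonal projection of `x` onto `Ω`. -/
theorem Submodule.exists_mem_forall_dotProduct_eq {𝕜 ι : Type*} [Field 𝕜] [LinearOrder 𝕜]
    [IsStrictOrderedRing 𝕜] [Fintype ι] (Ω : Submodule 𝕜 (ι → 𝕜)) (x : ι → 𝕜) :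
    ∃ y ∈ Ω, ∀ w ∈ Ω, w ⬝ᵥ y = w ⬝ᵥ x := by
  let B : Ω →ₗ[𝕜] Module.Dual 𝕜 Ω := ((dotProductBilin 𝕜 𝕜).compl₁₂ Ω.subtype Ω.subtype).flip
  have hB : Function.Injective B := by
    refine (injective_iff_map_eq_zero B).2 fun y hy => ?_
    simpa [B, dotProduct_self_eq_zero] using LinearMap.congr_fun hy y
  obtain ⟨y, hy⟩ := (LinearMap.injective_iff_surjective_of_finrank_eq_finrank
    Subspace.dual_finrank_eq.symm).1 hB (((dotProductBilin 𝕜 𝕜).flip x).comp Ω.subtype)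
  exact ⟨y, y.2, fun w hw => LinearMap.congr_fun hy ⟨w, hw⟩⟩

/-- **Domain decomposition for directed spanning sets**: if `ℝ^n` is spanned by subspaces
`Ω_1, …, Ω_K`, each `w_{k,ℓ} ∈ Ω_k`, and for every `x ∈ Ω_k` the vectors `w_{k,ℓ}` with
`⟨w_{k,ℓ}, x⟩ ≥ 0` span `Ω_k`, then for every `x ∈ ℝ^n` the stacked family of all vectors
having nonnegative inner product with `x` spans `ℝ^n`. -/
theorem dss_domain_decomposition {n K : ℕ} (Ω : Fin K → Submodule ℝ (Fin n → ℝ))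
    (hspan : (⨆ k, Ω k) = ⊤)
    (N : Fin K → ℕ) (w : ∀ k : Fin K, Fin (N k) → (Fin n → ℝ))
    (hmem : ∀ k ℓ, w k ℓ ∈ Ω k)
    (hDSS : ∀ k : Fin K, ∀ x ∈ Ω k,
      (Ω k : Set (Fin n → ℝ)) ⊆
        (Submodule.span ℝ
          {v : Fin n → ℝ | ∃ ℓ, 0 ≤ dotProduct (w k ℓ) x ∧ w k ℓ = v} :
          Submodule ℝ (Fin n → ℝ))) :
    ∀ x : Fin n → ℝ,
      Submodule.span ℝ
        {v : Fin n → ℝ | ∃ k ℓ, 0 ≤ dotProduct (w k ℓ) x ∧ w k ℓ = v} = ⊤ := by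
  intro x
  rw [eq_top_iff, ← hspan]
  refine iSup_le fun k => ?_
  obtain ⟨y, hyΩ, hy⟩ := (Ω k).exists_mem_forall_dotProduct_eq x
  have hselected : {v | ∃ ℓ, 0 ≤ w k ℓ ⬝ᵥ y ∧ w k ℓ = v} ⊆
      {v | ∃ k ℓ, 0 ≤ w k ℓ ⬝ᵥ x ∧ w k ℓ = v} := by
    rintro v ⟨ℓ, hℓ, rfl⟩
    exact ⟨k, ℓ, hy _ (hmem k ℓ) ▸ hℓ, rfl⟩
  exact (hDSS k y hyΩ).trans (Submodule.span_mono hselected)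
end

section
/- Let f : ℝ^n → ℝ^m be continuous, m ≥ 2n+1, let L ≥ 1, ε > 0, and let C ⊂ ℝ^n be compact. Then there exist a depth L, widths n_1 = n, n_2, …, n_{L+1}, weight matrices W_ℓ ∈ ℝ^{n_{ℓ+1}×n_ℓ} and biases b_ℓ ∈ ℝ^{n_{ℓ+1}} for ℓ = 1,…,L, and W_{L+1} ∈ ℝ^{m×n_{L+1}}, such that the ReLU network N(z) = W_{L+1}·ReLU(W_L(⋯ReLU(W_2·ReLU(W_1 z + b_1) + b_2)⋯) + b_L) is injective on all of ℝ^n and satisfies ‖f(x) − N(x)‖ ≤ ε for all x ∈ C. -/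
/-- The hidden part of a fully connected ReLU network: `forward d W b L x` applies `L`
layers `y ↦ ReLU(W_ℓ y + b_ℓ)` to the input `x ∈ ℝ^{d 0}`. -/
noncomputable def forward (d : ℕ → ℕ)
    (W : ∀ ℓ : ℕ, Matrix (Fin (d (ℓ + 1))) (Fin (d ℓ)) ℝ)
    (b : ∀ ℓ : ℕ, Fin (d (ℓ + 1)) → ℝ) :
    (L : ℕ) → (Fin (d 0) → ℝ) → (Fin (d L) → ℝ)
  | 0, x => x
  | (L + 1), x => fun j => max ((W L).mulVec (forward d W b L x) j + b L j) 0

/-!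
Coordinatewise, `f` is uniformly approximated on `C` by one-hidden-layer ReLU networks: the
exponential ridge functions `x ↦ exp (w x)` span a point-separating subalgebra, dense by
Stone–Weierstrass, and each of them is a continuous function of the scalar `w x`, hence uniformly
close to a piecewise-linear interpolant, which is a combination of ReLU units.

Adding the units `(xᵢ)⁺` and `(-xᵢ)⁺` makes the hidden layer `σ` injective. On each pair of
activation patterns, `(x, y) ↦ σ x - σ y` is affine on `ℝ²ⁿ`, so the readout matrices `M` with
`M σ x = M σ y` for some `σ x ≠ σ y` lie in finitely many images of smooth maps from spaces of
dimension `2n + m (H - 1) < m H`. A generic readout near the approximating one is therefore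
injective and still approximates. Further layers are identities, which ReLU fixes on the
nonnegative hidden outputs.
-/

open Set Finset Topology

noncomputable section

namespace ReLUNet

def ramp (s : ℝ) : ℝ := max s 0 - max (s - 1) 0

lemma ramp_of_nonpos {s : ℝ} (hs : s ≤ 0) : ramp s = 0 := by
  simp [ramp, max_eq_right hs, max_eq_right (by linarith : s - 1 ≤ 0)]

lemma ramp_of_one_le {s : ℝ} (hs : 1 ≤ s) : ramp s = 1 := by
  simp [ramp, max_eq_left (by linarith : 0 ≤ s), max_eq_left (by linarith : 0 ≤ s - 1)]

lemma ramp_nonneg_and_le_one (s : ℝ) : 0 ≤ ramp s ∧ ramp s ≤ 1 := by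
  rcases max_cases s 0 with ⟨h₁, _⟩ | ⟨h₁, _⟩ <;>
    rcases max_cases (s - 1) 0 with ⟨h₂, _⟩ | ⟨h₂, _⟩ <;>
    simp only [ramp, h₁, h₂] <;> constructor <;> linarith

/-- The `k`-th ramp climbs from `0` to `1` on `[a + k * h, a + (k + 1) * h]`, so the sum telescopes
to the piecewise-linear interpolant of `g` at the nodes `a + k * h`, `k ≤ N`. -/
def interpolant (g : ℝ → ℝ) (a h : ℝ) (N : ℕ) (t : ℝ) : ℝ :=
  g a + ∑ k ∈ range N, (g (a + (k + 1) * h) - g (a + k * h)) * ramp ((t - (a + k * h)) / h)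

lemma interpolant_of_le {g : ℝ → ℝ} {a h t : ℝ} (hh : 0 < h) {N : ℕ} (ht : a + N * h ≤ t) :
    interpolant g a h N t = g (a + N * h) := by
  have hramp : ∀ k ∈ range N, ramp ((t - (a + k * h)) / h) = 1 := fun k hk ↦ by
    have : (k + 1 : ℝ) ≤ N := by exact_mod_cast mem_range.mp hk
    exact ramp_of_one_le ((le_div_iff₀ hh).2 (by nlinarith))
  rw [interpolant, sum_congr rfl fun k hk ↦ by rw [hramp k hk, mul_one]]
  have := sum_range_sub (fun k : ℕ ↦ g (a + k * h)) N
  push_cast at this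
  rw [this]; simp

lemma abs_sub_lerp_le {x y z θ δ : ℝ} (hθ : 0 ≤ θ) (hθ1 : θ ≤ 1) (hx : |x - y| ≤ δ)
    (hz : |z - y| ≤ δ) : |x - (y + (z - y) * θ)| ≤ δ + δ :=
  calc |x - (y + (z - y) * θ)| = |(x - y) - (z - y) * θ| := by ring_nf
    _ ≤ |x - y| + |(z - y) * θ| := abs_sub _ _
    _ ≤ δ + δ := by
      rw [abs_mul, abs_of_nonneg hθ]
      exact add_le_add hx ((mul_le_of_le_one_right (abs_nonneg _) hθ1).trans hz)

theorem abs_sub_interpolant_le {g : ℝ → ℝ} {a h ε : ℝ} (hh : 0 < h) {N : ℕ}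
    (hg : ∀ s ∈ Icc a (a + N * h), ∀ t ∈ Icc a (a + N * h), |s - t| ≤ h → |g s - g t| ≤ ε / 2) :
    ∀ t ∈ Icc a (a + N * h), |g t - interpolant g a h N t| ≤ ε := by
  have ha : a ∈ Icc a (a + N * h) := ⟨le_rfl, by simp; positivity⟩
  have hε : 0 ≤ ε := by linarith [hg a ha a ha (by simp [hh.le]), abs_nonneg (g a - g a)]
  suffices ∀ K ≤ N, ∀ t ∈ Icc a (a + K * h), |g t - interpolant g a h K t| ≤ ε from this N le_rfl
  intro K
  induction K with
  | zero =>
    intro _ t ht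
    obtain rfl : t = a := by simpa using ht
    simpa [interpolant] using hε
  | succ K ih =>
    intro hK t ⟨hat, htK⟩
    have hKN : (K + 1 : ℝ) ≤ N := by exact_mod_cast hK
    have hsucc : interpolant g a h (K + 1) t = interpolant g a h K t +
        (g (a + (K + 1) * h) - g (a + K * h)) * ramp ((t - (a + K * h)) / h) := by
      simp only [interpolant, sum_range_succ]; ring
    push_cast at htK
    rcases le_total t (a + K * h) with ht | ht
    · rw [hsucc, ramp_of_nonpos (div_nonpos_of_nonpos_of_nonneg (by linarith) hh.le), mul_zero,
        add_zero]
      exact ih (by omega) t ⟨hat, ht⟩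
    · rw [hsucc, interpolant_of_le hh ht]
      have hmem : ∀ s, a + K * h ≤ s → s ≤ a + (K + 1) * h → s ∈ Icc a (a + N * h) :=
        fun s h1 h2 ↦ ⟨by nlinarith [(K.cast_nonneg : (0 : ℝ) ≤ K)], by nlinarith⟩
      have hK0 : a + K * h ∈ Icc a (a + N * h) := hmem _ le_rfl (by nlinarith)
      have h₁ := hg t (hmem t ht htK) _ hK0 (by rw [abs_le]; constructor <;> linarith)
      have h₂ := hg _ (hmem _ (by nlinarith) le_rfl) _ hK0
        (by rw [abs_le]; constructor <;> nlinarith)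
      obtain ⟨hθ, hθ1⟩ := ramp_nonneg_and_le_one ((t - (a + K * h)) / h)
      exact (abs_sub_lerp_le hθ hθ1 h₁ h₂).trans_eq (add_halves ε)

section Units

variable {E : Type*} [AddCommGroup E] [Module ℝ E] [TopologicalSpace E]

def reluUnit (u : (E →L[ℝ] ℝ) × ℝ) : C(E, ℝ) := ⟨fun x ↦ max (u.1 x + u.2) 0, by fun_prop⟩

@[simp] lemma reluUnit_apply (u : (E →L[ℝ] ℝ) × ℝ) (x : E) :
    reluUnit u x = max (u.1 x + u.2) 0 := rfl

end Units

open Submodule in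
lemma exists_mem_span_reluUnit_eq_interpolant (g : ℝ → ℝ) (a : ℝ) {h : ℝ} (hh : h ≠ 0) (N : ℕ) :
    ∃ φ ∈ span ℝ (range (reluUnit (E := ℝ))), ∀ t, φ t = interpolant g a h N t := by
  let w : ℝ →L[ℝ] ℝ := h⁻¹ • ContinuousLinearMap.id ℝ ℝ
  let c (k : ℕ) : ℝ := -(a + k * h) / h
  refine ⟨g a • reluUnit (0, 1) + ∑ k ∈ range N, (g (a + (k + 1) * h) - g (a + k * h)) •
      (reluUnit (w, c k) - reluUnit (w, c k - 1)), ?_, fun t ↦ ?_⟩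
  · exact add_mem (smul_mem _ _ (subset_span ⟨_, rfl⟩)) (sum_mem fun k _ ↦
      smul_mem _ _ (sub_mem (subset_span ⟨_, rfl⟩) (subset_span ⟨_, rfl⟩)))
  · simp only [interpolant, ramp, ContinuousMap.add_apply, ContinuousMap.smul_apply,
      ContinuousMap.coe_sum, Finset.sum_apply, ContinuousMap.sub_apply, reluUnit_apply]
    congr 1
    · simp
    · refine sum_congr rfl fun k _ ↦ ?_
      have : w t + c k = (t - (a + k * h)) / h := by simp [w, c]; field_simp; ring
      simp only [smul_eq_mul, this, sub_eq_add_neg (c k), ← add_assoc]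
      ring_nf

theorem exists_mem_span_reluUnit_approx {g : ℝ → ℝ} (hg : Continuous g) (a b : ℝ) {ε : ℝ}
    (hε : 0 < ε) :
    ∃ φ ∈ Submodule.span ℝ (range (reluUnit (E := ℝ))), ∀ t ∈ Icc a b, |g t - φ t| < ε := by
  set b' := max b (a + 1)
  have hab : a < b' := by simp [b']
  obtain ⟨δ, hδ, hgδ⟩ := Metric.uniformContinuousOn_iff_le.1
    ((isCompact_Icc (a := a) (b := b')).uniformContinuousOn_of_continuous hg.continuousOn)
    (ε / 2 / 2) (by positivity)
  obtain ⟨N, hN⟩ := exists_nat_gt ((b' - a) / δ)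
  have hN0 : (0 : ℝ) < N := (div_pos (sub_pos.2 hab) hδ).trans hN
  set h := (b' - a) / N
  have hh : 0 < h := by positivity
  have hNh : a + N * h = b' := by simp only [h]; field_simp; ring
  have hhδ : h ≤ δ := by
    rw [div_lt_iff₀ hδ] at hN; simp only [h]; rw [div_le_iff₀ hN0]; linarith
  obtain ⟨φ, hφ, hφg⟩ := exists_mem_span_reluUnit_eq_interpolant g a hh.ne' N
  refine ⟨φ, hφ, fun t ht ↦ ?_⟩
  have hg' : ∀ s ∈ Icc a (a + N * h), ∀ t ∈ Icc a (a + N * h), |s - t| ≤ h →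
      |g s - g t| ≤ ε / 2 / 2 := by
    rw [hNh]
    intro s hs t ht hst
    simpa only [Real.dist_eq] using hgδ s hs t ht (by rw [Real.dist_eq]; linarith)
  have hle := abs_sub_interpolant_le hh hg' t
    (by rw [hNh]; exact ⟨ht.1, ht.2.trans (le_max_left _ _)⟩)
  rw [hφg]
  linarith

section StoneWeierstrass

open Submodule

variable {E : Type*} [AddCommGroup E] [Module ℝ E] [TopologicalSpace E] (K : Set E)

def expRidge (w : E →L[ℝ] ℝ) : C(K, ℝ) := ⟨fun x ↦ Real.exp (w x), by fun_prop⟩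

lemma expRidge_mem_topologicalClosure [CompactSpace K] (w : E →L[ℝ] ℝ) :
    expRidge K w ∈ (span ℝ (range fun u ↦ (reluUnit u).restrict K)).topologicalClosure := by
  let wK : C(K, ℝ) := ⟨fun x ↦ w x, by fun_prop⟩
  obtain ⟨a, ha⟩ := (isCompact_range wK.continuous).bddBelow
  obtain ⟨b, hb⟩ := (isCompact_range wK.continuous).bddAbove
  rw [← SetLike.mem_coe, topologicalClosure_coe, Metric.mem_closure_iff]
  intro ε hε
  obtain ⟨φ, hφ, hφexp⟩ := exists_mem_span_reluUnit_approx Real.continuous_exp a b hε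
  let T := (ContinuousMap.compRightAlgHom ℝ ℝ wK).toLinearMap
  refine ⟨T φ, ?_, ?_⟩
  · have := mem_map_of_mem (f := T) hφ
    rw [map_span] at this
    refine span_mono ?_ this
    rintro _ ⟨_, ⟨u, rfl⟩, rfl⟩
    exact ⟨(u.1.comp w, u.2), rfl⟩
  · rw [ContinuousMap.dist_lt_iff hε]
    intro x
    exact hφexp _ ⟨ha ⟨x, rfl⟩, hb ⟨x, rfl⟩⟩

theorem topologicalClosure_span_reluUnit_restrict_eq_top [SeparatingDual ℝ E] [CompactSpace K] :
    (span ℝ (range fun u ↦ (reluUnit u).restrict K)).topologicalClosure = ⊤ := by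
  set S := span ℝ (range fun u ↦ (reluUnit u).restrict K)
  let A := Algebra.adjoin ℝ (range (expRidge K))
  have hAV : (A : Set C(K, ℝ)) ⊆ S.topologicalClosure := by
    -- `exp (w x) * exp (w' x) = exp ((w + w') x)`: the ridges span the algebra they generate
    have hclosure : (Submonoid.closure (range (expRidge K)) : Set C(K, ℝ)) ⊆ range (expRidge K) :=
      fun f hf ↦ Submonoid.closure_induction (fun f hf ↦ hf)
        ⟨0, by ext; simp [expRidge]⟩
        (fun _ _ _ _ ⟨w, hw⟩ ⟨w', hw'⟩ ↦
          ⟨w + w', by ext; simp [← hw, ← hw', expRidge, Real.exp_add]⟩) hf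
    rw [← Subalgebra.coe_toSubmodule, Algebra.adjoin_eq_span, SetLike.coe_subset_coe, span_le]
    rintro _ hf
    obtain ⟨w, rfl⟩ := hclosure hf
    exact expRidge_mem_topologicalClosure K w
  have hsep : A.SeparatesPoints := fun x y hxy ↦ by
    obtain ⟨w, hw⟩ :=
      SeparatingDual.exists_separating_of_ne (R := ℝ) (Subtype.coe_injective.ne hxy)
    exact ⟨_, ⟨expRidge K w, Algebra.subset_adjoin ⟨w, rfl⟩, rfl⟩, by simpa [expRidge] using hw⟩
  refine eq_top_iff.2 fun f _ ↦ closure_minimal hAV S.isClosed_topologicalClosure ?_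
  rw [← Subalgebra.topologicalClosure_coe,
    ContinuousMap.subalgebra_topologicalClosure_eq_top_of_separatesPoints A hsep]
  trivial

end StoneWeierstrass

section Genericity

open Module

variable {Z ι : Type*} [Fintype ι] {m : ℕ}

/-- The matrices killing `G z`, where `G z j ≠ 0`, are parametrized by `z` and their columns
other than `j`. -/
def solveColumn [DecidableEq ι] (G : Z → ι → ℝ) (j : ι) (p : Z × (Fin m → {k // k ≠ j} → ℝ)) :
    Fin m → ι → ℝ :=
  fun i k ↦ if h : k = j then -(∑ l, p.2 i l * G p.1 l) / G p.1 j else p.2 i ⟨k, h⟩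

lemma setOf_exists_dotProduct_eq_zero_subset_iUnion_image_solveColumn [DecidableEq ι]
    (G : Z → ι → ℝ) :
    {M : Fin m → ι → ℝ | ∃ z, G z ≠ 0 ∧ ∀ i, M i ⬝ᵥ G z = 0} ⊆
      ⋃ j, solveColumn G j '' {p | G p.1 j ≠ 0} := by
  rintro M ⟨z, hz, hM⟩
  obtain ⟨j, hj⟩ := Function.ne_iff.1 hz
  refine mem_iUnion.2 ⟨j, (z, fun i l ↦ M i l), hj, funext fun i ↦ funext fun k ↦ ?_⟩
  by_cases hk : k = j
  · subst hk
    have := hM i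
    rw [dotProduct, Fintype.sum_eq_add_sum_subtype_ne _ k] at this
    simp only [solveColumn, dif_pos]
    rw [div_eq_iff hj]
    linarith
  · simp [solveColumn, hk]

lemma contDiffAt_solveColumn [NormedAddCommGroup Z] [NormedSpace ℝ Z] [DecidableEq ι]
    {G : Z → ι → ℝ} (hG : ContDiff ℝ 1 G) {j : ι} {p : Z × (Fin m → {k // k ≠ j} → ℝ)}
    (hp : G p.1 j ≠ 0) :
    ContDiffAt ℝ 1 (solveColumn G j) p := by
  have hGk (k : ι) : ContDiff ℝ 1 fun p : Z × (Fin m → {k // k ≠ j} → ℝ) ↦ G p.1 k :=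
    (contDiff_pi.1 hG k).comp contDiff_fst
  refine contDiffAt_pi.2 fun i ↦ contDiffAt_pi.2 fun k ↦ ?_
  by_cases hk : k = j
  · subst hk
    simp only [solveColumn, dif_pos]
    refine ContDiffAt.div ?_ (hGk k).contDiffAt hp
    fun_prop
  · simp only [solveColumn, dif_neg hk]
    fun_prop

theorem dimH_setOf_exists_dotProduct_eq_zero_le [NormedAddCommGroup Z] [NormedSpace ℝ Z]
    [FiniteDimensional ℝ Z] {G : Z → ι → ℝ} (hG : ContDiff ℝ 1 G) :
    dimH {M : Fin m → ι → ℝ | ∃ z, G z ≠ 0 ∧ ∀ i, M i ⬝ᵥ G z = 0} ≤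
      (finrank ℝ Z + m * (Fintype.card ι - 1) : ℕ) := by
  classical
  refine (dimH_mono (setOf_exists_dotProduct_eq_zero_subset_iUnion_image_solveColumn G)).trans ?_
  rw [dimH_iUnion]
  refine iSup_le fun j ↦ ?_
  calc dimH (solveColumn G j '' {p | G p.1 j ≠ 0})
      ≤ dimH {p : Z × (Fin m → {k // k ≠ j} → ℝ) | G p.1 j ≠ 0} :=
        dimH_image_le_of_locally_lipschitzOn fun p hp ↦
          have ⟨K, t, ht, hK⟩ := (contDiffAt_solveColumn hG hp).exists_lipschitzOnWith
          ⟨K, t, mem_nhdsWithin_of_mem_nhds ht, hK⟩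
    _ ≤ dimH (univ : Set (Z × (Fin m → {k // k ≠ j} → ℝ))) := dimH_mono (subset_univ _)
    _ = _ := by
      rw [Real.dimH_univ_eq_finrank, finrank_prod, finrank_pi_fintype]
      simp [Fintype.card_subtype_compl]

theorem dense_setOf_forall_exists_dotProduct_ne_zero [NormedAddCommGroup Z] [NormedSpace ℝ Z]
    [FiniteDimensional ℝ Z] {P : Type*} [Countable P]
    (G : P → Z → ι → ℝ) (hG : ∀ p, ContDiff ℝ 1 (G p)) (hm : finrank ℝ Z < m) :
    Dense {M : Fin m → ι → ℝ | ∀ p z, G p z ≠ 0 → ∃ i, M i ⬝ᵥ G p z ≠ 0} := by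
  cases isEmpty_or_nonempty ι
  · simp [Subsingleton.elim _ (0 : ι → ℝ)]
  have hcompl : {M : Fin m → ι → ℝ | ∀ p z, G p z ≠ 0 → ∃ i, M i ⬝ᵥ G p z ≠ 0} =
      (⋃ p, {M | ∃ z, G p z ≠ 0 ∧ ∀ i, M i ⬝ᵥ G p z = 0})ᶜ := by
    ext M; simp
  rw [hcompl]
  refine dense_compl_of_dimH_lt_finrank ?_
  rw [dimH_iUnion]
  refine (iSup_le fun p ↦ dimH_setOf_exists_dotProduct_eq_zero_le (hG p)).trans_lt ?_
  rw [finrank_pi_fintype]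
  obtain ⟨c, hc⟩ : ∃ c, Fintype.card ι = c + 1 :=
    ⟨_, (Nat.succ_pred_eq_of_pos Fintype.card_pos).symm⟩
  norm_cast
  simp only [finrank_fintype_fun_eq_card, Finset.sum_const, Finset.card_univ, Fintype.card_fin,
    smul_eq_mul, hc, Nat.add_sub_cancel, Nat.mul_succ]
  omega

end Genericity


lemma enorm_le_sum_abs {ι : Type*} [Fintype ι] (v : ι → ℝ) : _root_.enorm v ≤ ∑ i, |v i| :=
  (Real.sqrt_le_left (by positivity)).2 <| by
    simpa only [sq_abs] using sum_sq_le_sq_sum_of_nonneg (s := univ) fun i _ ↦ abs_nonneg (v i)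

lemma continuous_enorm {ι : Type*} [Fintype ι] : Continuous (_root_.enorm : (ι → ℝ) → ℝ) := by
  unfold _root_.enorm; fun_prop

section HiddenLayer

variable {E : Type*} [AddCommGroup E] [Module ℝ E] [TopologicalSpace E] {ι : Type*}

def reluLayer (u : ι → (E →L[ℝ] ℝ) × ℝ) (x : E) : ι → ℝ := fun k ↦ reluUnit (u k) x

lemma continuous_reluLayer (u : ι → (E →L[ℝ] ℝ) × ℝ) : Continuous (reluLayer u) :=
  continuous_pi fun k ↦ (reluUnit (u k)).continuous

lemma reluLayer_eq_indicator (u : ι → (E →L[ℝ] ℝ) × ℝ) (x : E) :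
    reluLayer u x = {k | 0 ≤ (u k).1 x + (u k).2}.indicator fun k ↦ (u k).1 x + (u k).2 := by
  ext k
  by_cases hk : 0 ≤ (u k).1 x + (u k).2
  · simp [reluLayer, hk]
  · simp [reluLayer, hk, (not_le.1 hk).le]

lemma apply_eq_of_reluLayer_eq {u : ι → (E →L[ℝ] ℝ) × ℝ} {w : E →L[ℝ] ℝ} {k l : ι}
    (hk : u k = (w, 0)) (hl : u l = (-w, 0)) {x y : E} (hxy : reluLayer u x = reluLayer u y) :
    w x = w y := by
  have hpos := congrFun hxy k
  have hneg := congrFun hxy l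
  simp only [reluLayer, reluUnit_apply, hk, hl, add_zero, neg_apply] at hpos hneg
  rw [← max_zero_sub_max_neg_zero_eq_self (w x), ← max_zero_sub_max_neg_zero_eq_self (w y), hpos,
    hneg]

end HiddenLayer

section Approximation

variable {E : Type*} [AddCommGroup E] [Module ℝ E] [TopologicalSpace E] [SeparatingDual ℝ E]
  {K : Set E}

theorem exists_finsupp_reluUnit_approx (hK : IsCompact K) {g : E → ℝ} (hg : ContinuousOn g K)
    {ε : ℝ} (hε : 0 < ε) :
    ∃ c : (E →L[ℝ] ℝ) × ℝ →₀ ℝ, ∀ x ∈ K, |g x - c.sum fun u a ↦ a * reluUnit u x| < ε := by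
  have : CompactSpace K := isCompact_iff_compactSpace.1 hK
  have hgK : (⟨fun x : K ↦ g x, continuousOn_iff_continuous_domRestrict.1 hg⟩ : C(K, ℝ)) ∈
      (Submodule.span ℝ (range fun u ↦ (reluUnit u).restrict K)).topologicalClosure := by
    rw [topologicalClosure_span_reluUnit_restrict_eq_top]; trivial
  rw [← SetLike.mem_coe, Submodule.topologicalClosure_coe, Metric.mem_closure_iff] at hgK
  obtain ⟨φ, hφ, hgφ⟩ := hgK ε hε
  obtain ⟨c, rfl⟩ := Finsupp.mem_span_range_iff_exists_finsupp.1 hφ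
  refine ⟨c, fun x hx ↦ ?_⟩
  have := (ContinuousMap.dist_lt_iff hε).1 hgφ ⟨x, hx⟩
  simp only [Real.dist_eq, Finsupp.sum, ContinuousMap.coe_sum, Finset.sum_apply,
    ContinuousMap.smul_apply, smul_eq_mul] at this ⊢
  exact this

theorem exists_reluLayer_approx (hK : IsCompact K) {ι : Type*} [Fintype ι] {f : E → ι → ℝ}
    (hf : ContinuousOn f K) (J : Finset ((E →L[ℝ] ℝ) × ℝ)) {ε : ℝ} (hε : 0 < ε) :
    ∃ T ⊇ J, ∃ M : ι → T → ℝ,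
      ∀ x ∈ K, _root_.enorm (f x - fun i ↦ M i ⬝ᵥ reluLayer Subtype.val x) < ε := by
  classical
  set δ := ε / (Fintype.card ι + 1)
  choose c hc using fun i ↦
    exists_finsupp_reluUnit_approx hK ((continuous_apply i).comp_continuousOn hf)
      (show 0 < δ by positivity)
  set T := J ∪ univ.biUnion fun i ↦ (c i).support
  refine ⟨T, subset_union_left, fun i u ↦ c i u, fun x hx ↦ ?_⟩
  have hsum (i : ι) : (fun u : T ↦ c i u) ⬝ᵥ reluLayer Subtype.val x =
      (c i).sum fun u a ↦ a * reluUnit u x := by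
    simp only [dotProduct, reluLayer]
    rw [sum_coe_sort T fun u ↦ c i u * reluUnit u x, Finsupp.sum]
    refine (sum_subset (fun u hu ↦ mem_union_right _ (mem_biUnion.2 ⟨i, mem_univ _, hu⟩))
      fun u _ hu ↦ by simp [Finsupp.notMem_support_iff.1 hu]).symm
  calc _root_.enorm _
      ≤ ∑ i, |f x i - (fun u : T ↦ c i u) ⬝ᵥ reluLayer Subtype.val x| := enorm_le_sum_abs _
    _ = ∑ i, |f x i - (c i).sum fun u a ↦ a * reluUnit u x| := by simp only [hsum]
    _ ≤ ∑ _i : ι, δ := sum_le_sum fun i _ ↦ (hc i x hx).le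
    _ < ε := by
      rw [sum_const, card_univ, nsmul_eq_mul, mul_div_assoc']
      exact (div_lt_iff₀ (by positivity)).2 (by linarith)

end Approximation

lemma eventually_forall_enorm_sub_dotProduct_lt {X : Type*} [TopologicalSpace X] {K : Set X}
    (hK : IsCompact K) {ι κ : Type*} [Fintype ι] [Fintype κ] {F : X → ι → ℝ} {σ : X → κ → ℝ}
    (hF : Continuous F) (hσ : Continuous σ) {M₀ : ι → κ → ℝ} {ε : ℝ}
    (hM₀ : ∀ x ∈ K, _root_.enorm (F x - fun i ↦ M₀ i ⬝ᵥ σ x) < ε) :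
    ∀ᶠ M in 𝓝 M₀, ∀ x ∈ K, _root_.enorm (F x - fun i ↦ M i ⬝ᵥ σ x) < ε := by
  have hcont : Continuous fun p : (ι → κ → ℝ) × X ↦
      _root_.enorm (F p.2 - fun i ↦ p.1 i ⬝ᵥ σ p.2) :=
    continuous_enorm.comp (by fun_prop)
  exact hK.eventually_forall_of_forall_eventually fun x hx ↦
    hcont.continuousAt.eventually_lt continuousAt_const (hM₀ x hx)

section Injectivity

variable {E : Type*} [NormedAddCommGroup E] [NormedSpace ℝ E] [FiniteDimensional ℝ E]
  {ι : Type*} [Fintype ι] {m : ℕ}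

theorem dense_setOf_injective_dotProduct_reluLayer {u : ι → (E →L[ℝ] ℝ) × ℝ}
    (hu : Function.Injective (reluLayer u)) (hm : 2 * Module.finrank ℝ E < m) :
    Dense {M : Fin m → ι → ℝ | Function.Injective fun x i ↦ M i ⬝ᵥ reluLayer u x} := by
  classical
  let a (x : E) (k : ι) : ℝ := (u k).1 x + (u k).2
  let G (pq : Set ι × Set ι) (z : E × E) : ι → ℝ :=
    pq.1.indicator (a z.1) - pq.2.indicator (a z.2)
  have hG (pq : Set ι × Set ι) : ContDiff ℝ 1 (G pq) := contDiff_pi.2 fun k ↦ by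
    simp only [G, Pi.sub_apply, Set.indicator_apply, a]
    split_ifs <;> fun_prop
  refine (dense_setOf_forall_exists_dotProduct_ne_zero G hG
    (by rwa [Module.finrank_prod, ← two_mul])).mono fun M hM x y hxy ↦ ?_
  by_contra hne
  -- on the activation patterns of `x` and `y`, the hidden layer is affine
  have hGxy : G ({k | 0 ≤ a x k}, {k | 0 ≤ a y k}) (x, y) = reluLayer u x - reluLayer u y := by
    simp only [G, a, reluLayer_eq_indicator]
  obtain ⟨i, hi⟩ := hM _ _ (by rw [hGxy]; exact sub_ne_zero.2 (hu.ne hne))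
  exact hi (by rw [hGxy, dotProduct_sub, sub_eq_zero]; exact congrFun hxy i)

theorem exists_injective_reluLayer_approx (hm : 2 * Module.finrank ℝ E < m) {K : Set E}
    (hK : IsCompact K) {f : E → Fin m → ℝ} (hf : Continuous f) {ε : ℝ} (hε : 0 < ε) :
    ∃ (T : Finset ((E →L[ℝ] ℝ) × ℝ)) (M : Fin m → T → ℝ),
      Function.Injective (fun x i ↦ M i ⬝ᵥ reluLayer Subtype.val x) ∧
      ∀ x ∈ K, _root_.enorm (f x - fun i ↦ M i ⬝ᵥ reluLayer Subtype.val x) < ε := by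
  classical
  let b := Module.finBasis ℝ E
  let coord (i : Fin (Module.finrank ℝ E)) : E →L[ℝ] ℝ :=
    LinearMap.toContinuousLinearMap (b.coord i)
  let J : Finset ((E →L[ℝ] ℝ) × ℝ) :=
    Finset.univ.image (fun i ↦ (coord i, 0)) ∪ Finset.univ.image (fun i ↦ (-coord i, 0))
  obtain ⟨T, hJT, M₀, hM₀⟩ := exists_reluLayer_approx hK hf.continuousOn J hε
  have hinj : Function.Injective (reluLayer (Subtype.val : T → (E →L[ℝ] ℝ) × ℝ)) := fun x y hxy ↦
    b.ext_elem fun i ↦ by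
      simpa [coord] using apply_eq_of_reluLayer_eq
        (k := ⟨_, hJT (by simp [J] : (coord i, 0) ∈ J)⟩)
        (l := ⟨_, hJT (by simp [J] : (-coord i, 0) ∈ J)⟩) rfl rfl hxy
  obtain ⟨M, hMinj, hMf⟩ :=
    (dense_setOf_injective_dotProduct_reluLayer hinj hm).inter_nhds_nonempty
      (eventually_forall_enorm_sub_dotProduct_lt hK hf (continuous_reluLayer _) hM₀)
  exact ⟨T, M, hMinj, hMf⟩

end Injectivity

open Matrix

def widths (n H : ℕ) : ℕ → ℕ
  | 0 => n
  | _ + 1 => H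

def padWeights {n H : ℕ} (W₁ : Matrix (Fin H) (Fin n) ℝ) :
    ∀ ℓ, Matrix (Fin (widths n H (ℓ + 1))) (Fin (widths n H ℓ)) ℝ
  | 0 => W₁
  | _ + 1 => (1 : Matrix (Fin H) (Fin H) ℝ)

def padBiases {n H : ℕ} (b₁ : Fin H → ℝ) : ∀ ℓ, Fin (widths n H (ℓ + 1)) → ℝ
  | 0 => b₁
  | _ + 1 => 0

lemma forward_padWeights {n H : ℕ} (W₁ : Matrix (Fin H) (Fin n) ℝ) (b₁ : Fin H → ℝ) (L : ℕ)
    (x : Fin n → ℝ) :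
    forward (widths n H) (padWeights W₁) (padBiases b₁) (L + 1) x =
      fun j ↦ max ((W₁ *ᵥ x) j + b₁ j) 0 := by
  induction L with
  | zero => rfl
  | succ L ih =>
    ext j
    change max (((1 : Matrix (Fin H) (Fin H) ℝ) *ᵥ
      forward (widths n H) (padWeights W₁) (padBiases b₁) (L + 1) x) j + 0) 0 = _
    rw [ih, Matrix.one_mulVec, add_zero, max_eq_left (le_max_right _ _)]

theorem exists_forward_eq_dotProduct_reluLayer {n m L : ℕ} (hL : 1 ≤ L) {ι : Type*} [Fintype ι]
    (u : ι → ((Fin n → ℝ) →L[ℝ] ℝ) × ℝ) (M : Fin m → ι → ℝ) :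
    ∃ (d : ℕ → ℕ) (hd : d 0 = n) (W : ∀ ℓ : ℕ, Matrix (Fin (d (ℓ + 1))) (Fin (d ℓ)) ℝ)
      (b : ∀ ℓ : ℕ, Fin (d (ℓ + 1)) → ℝ) (Wout : Matrix (Fin m) (Fin (d L)) ℝ),
      ∀ x, Wout *ᵥ forward d W b L (x ∘ Fin.cast hd) = fun i ↦ M i ⬝ᵥ reluLayer u x := by
  obtain ⟨L, rfl⟩ : ∃ L', L = L' + 1 := ⟨L - 1, by omega⟩
  let e := Fintype.equivFin ι
  let W₁ : Matrix (Fin (Fintype.card ι)) (Fin n) ℝ :=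
    LinearMap.toMatrix' (LinearMap.pi fun j ↦ ((u (e.symm j)).1 : (Fin n → ℝ) →ₗ[ℝ] ℝ))
  refine ⟨widths n _, rfl, padWeights W₁, padBiases fun j ↦ (u (e.symm j)).2,
    Matrix.of fun i j ↦ M i (e.symm j), fun x ↦ ?_⟩
  change (Matrix.of fun i j ↦ M i (e.symm j)) *ᵥ forward (widths n _) (padWeights W₁)
    (padBiases fun j ↦ (u (e.symm j)).2) (L + 1) x = _
  rw [forward_padWeights]
  ext i
  simp only [W₁, LinearMap.toMatrix'_mulVec]
  simp only [Matrix.mulVec, dotProduct, Matrix.of_apply]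
  exact e.symm.sum_comp fun k ↦ M i k * reluLayer u x k

end ReLUNet

end

open ReLUNet in
/-- **Universal approximation with injective ReLU networks**: for continuous
`f : ℝ^n → ℝ^m` with `m ≥ 2n+1`, any depth `L ≥ 1`, any `ε > 0` and any compact
`C ⊂ ℝ^n`, there is a depth-`L` ReLU network
`N(z) = W_{L+1} ReLU(W_L ⋯ ReLU(W_1 z + b_1) ⋯ + b_L)` that is injective on all of `ℝ^n`
and satisfies `‖f(x) − N(x)‖ ≤ ε` on `C`. -/
theorem injective_relu_network_universal_approximation
    (n m L : ℕ) (hm : 2 * n + 1 ≤ m) (hL : 1 ≤ L)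
    (f : (Fin n → ℝ) → (Fin m → ℝ)) (hf : Continuous f)
    (ε : ℝ) (hε : 0 < ε) (C : Set (Fin n → ℝ)) (hC : IsCompact C) :
    ∃ (d : ℕ → ℕ) (hd : d 0 = n)
      (W : ∀ ℓ : ℕ, Matrix (Fin (d (ℓ + 1))) (Fin (d ℓ)) ℝ)
      (b : ∀ ℓ : ℕ, Fin (d (ℓ + 1)) → ℝ)
      (Wout : Matrix (Fin m) (Fin (d L)) ℝ),
      Function.Injective
        (fun x : Fin n → ℝ => Wout.mulVec (forward d W b L (x ∘ Fin.cast hd))) ∧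
      ∀ x ∈ C,
        _root_.enorm (f x - Wout.mulVec (forward d W b L (x ∘ Fin.cast hd))) ≤ ε := by
  obtain ⟨T, M, hinj, happrox⟩ :=
    exists_injective_reluLayer_approx (by rw [Module.finrank_fin_fun]; omega) hC hf hε
  obtain ⟨d, hd, W, b, Wout, hN⟩ := exists_forward_eq_dotProduct_reluLayer hL Subtype.val M
  refine ⟨d, hd, W, b, Wout, ?_, fun x hx ↦ ?_⟩
  · simpa only [hN] using hinj
  · rw [hN]
    exact (happrox x hx).le
end

section
/- Let H : ℝ^n → ℝ^D be injective and locally Lipschitz, and define s : {(x,y) ∈ ℝ^n × ℝ^n : x ≠ y} → S^{D−1} by s(x,y) = (H(x) − H(y))/‖H(x) − H(y)‖. Then the image of s, as a subset of the unit sphere S^{D−1} ⊂ ℝ^D, has Hausdorff dimension at most 2n. In particular, if D − 1 > 2n, the image of s has empty interior in S^{D−1}. -/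
/-!
Normalised secants are the image of the open set `{x ≠ y} ⊆ ℝⁿ × ℝⁿ` under
`(x, y) ↦ ‖H x - H y‖⁻¹ • (H x - H y)`, which is locally Lipschitz there because `H` is and the
normalisation `u ↦ ‖u‖⁻¹ • u` is smooth away from `0`; locally Lipschitz maps do not raise
Hausdorff dimension, so the image has dimension at most `2n`. Conversely, a subset of `S^{D-1}`
containing a relatively open neighbourhood of a point `v` projects orthogonally onto a
neighbourhood of `0` in `v^⊥` (the hemisphere around `v` is a graph over the unit ball of `v^⊥`),
and the projection is `1`-Lipschitz, so the subset has dimension at least `D - 1`.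
-/

open Set Module Metric Filter Topology
open scoped ENNReal NNReal

theorem LocallyLipschitzOn.comp_locallyLipschitz {α β γ : Type*} [PseudoEMetricSpace α]
    [PseudoEMetricSpace β] [PseudoEMetricSpace γ] {f : β → γ} {g : α → β} {s : Set α}
    {t : Set β} (hf : LocallyLipschitzOn t f) (hg : LocallyLipschitz g) (hst : MapsTo g s t) :
    LocallyLipschitzOn s (f ∘ g) := by
  intro x hx
  obtain ⟨Kf, u, hu, hfu⟩ := hf (hst hx)
  obtain ⟨Kg, w, hw, hgw⟩ := hg x
  refine ⟨Kf * Kg, w ∩ g ⁻¹' u,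
    inter_mem (mem_nhdsWithin_of_mem_nhds hw)
      (hg.continuous.continuousWithinAt.tendsto_nhdsWithin hst hu), ?_⟩
  exact hfu.comp (hgw.mono inter_subset_left)
    ((mapsTo_preimage g u).mono_left inter_subset_right)

section InnerProductSpace

variable {E : Type*} [NormedAddCommGroup E] [InnerProductSpace ℝ E]

theorem locallyLipschitzOn_inv_norm_smul :
    LocallyLipschitzOn {0}ᶜ (fun u : E => ‖u‖⁻¹ • u) := by
  intro u (hu : u ≠ 0)
  have hsmooth : ContDiffAt ℝ 1 (fun u : E => ‖u‖⁻¹ • u) u :=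
    ((contDiffAt_norm ℝ hu).inv (norm_ne_zero_iff.2 hu)).smul contDiffAt_id
  obtain ⟨K, t, ht, hK⟩ := hsmooth.exists_lipschitzOnWith
  exact ⟨K, t, mem_nhdsWithin_of_mem_nhds ht, hK⟩

theorem dimH_image_inv_norm_smul_le {X : Type*} [EMetricSpace X] [SecondCountableTopology X]
    {g : X → E} (hg : LocallyLipschitz g) {s : Set X} (hs : ∀ x ∈ s, g x ≠ 0) :
    dimH ((fun x => ‖g x‖⁻¹ • g x) '' s) ≤ dimH s :=
  dimH_image_le_of_locally_lipschitzOn <|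
    locallyLipschitzOn_inv_norm_smul.comp_locallyLipschitz hg hs

noncomputable def hemisphereLift (v : E) (w : (ℝ ∙ v)ᗮ) : E :=
  w + √(1 - ‖w‖ ^ 2) • v

variable {v : E}

theorem continuous_hemisphereLift : Continuous (hemisphereLift v) :=
  continuous_subtype_val.add
    ((continuous_const.sub (continuous_norm.pow 2)).sqrt.smul continuous_const)

@[simp]
theorem hemisphereLift_zero : hemisphereLift v 0 = v := by
  simp [hemisphereLift]

theorem norm_hemisphereLift (hv : ‖v‖ = 1) {w : (ℝ ∙ v)ᗮ} (hw : ‖w‖ ≤ 1) :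
    ‖hemisphereLift v w‖ = 1 := by
  have horth : inner ℝ (w : E) (√(1 - ‖w‖ ^ 2) • v) = 0 :=
    Submodule.inner_left_of_mem_orthogonal
      (Submodule.smul_mem _ _ (Submodule.mem_span_singleton_self v)) w.2
  have hsq : 0 ≤ 1 - ‖w‖ ^ 2 := by nlinarith [norm_nonneg w]
  have : ‖hemisphereLift v w‖ ^ 2 = 1 := by
    rw [hemisphereLift, norm_add_sq_real, horth, norm_smul,
      Real.norm_of_nonneg (Real.sqrt_nonneg _), hv, mul_one, Real.sq_sqrt hsq,
      Submodule.coe_norm]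
    ring
  exact (pow_eq_one_iff_of_nonneg (norm_nonneg _) two_ne_zero).1 this

theorem orthogonalProjectionOnto_hemisphereLift (w : (ℝ ∙ v)ᗮ) :
    (ℝ ∙ v)ᗮ.orthogonalProjectionOnto (hemisphereLift v w) = w := by
  have hv : (ℝ ∙ v)ᗮ.orthogonalProjectionOnto v = 0 :=
    Submodule.orthogonalProjectionOnto_apply_of_mem_orthogonal
      (Submodule.le_orthogonal_orthogonal _ (Submodule.mem_span_singleton_self v))
  simp [hemisphereLift, Submodule.orthogonalProjectionOnto_mem_subspace_eq_self, hv]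

theorem finrank_sub_one_le_dimH_of_mem_nhdsWithin_sphere [FiniteDimensional ℝ E] {S : Set E}
    (hv : ‖v‖ = 1) (hS : S ∈ 𝓝[sphere 0 1] v) : ((finrank ℝ E - 1 : ℕ) : ℝ≥0∞) ≤ dimH S := by
  have hlift : Tendsto (hemisphereLift v) (𝓝 0) (𝓝[sphere 0 1] v) := by
    have := (continuous_hemisphereLift.continuousWithinAt (x := 0)).tendsto_nhdsWithin fun w hw =>
      mem_sphere_zero_iff_norm.2 (norm_hemisphereLift hv (mem_closedBall_zero_iff.1 hw))
    rwa [nhdsWithin_eq_nhds.2 (closedBall_mem_nhds _ one_pos), hemisphereLift_zero] at this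
  have hK : finrank ℝ (ℝ ∙ v)ᗮ = finrank ℝ E - 1 := by
    have := Submodule.finrank_add_finrank_orthogonal (ℝ ∙ v)
    rw [finrank_span_singleton (norm_ne_zero_iff.1 (hv.trans_ne one_ne_zero))] at this
    omega
  calc ((finrank ℝ E - 1 : ℕ) : ℝ≥0∞) = dimH (hemisphereLift v ⁻¹' S) := by
        rw [Real.dimH_of_mem_nhds (hlift hS), hK]
    _ ≤ dimH ((ℝ ∙ v)ᗮ.orthogonalProjectionOnto '' S) :=
        dimH_mono fun w hw => ⟨_, hw, orthogonalProjectionOnto_hemisphereLift w⟩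
    _ ≤ dimH S := (ℝ ∙ v)ᗮ.orthogonalProjectionOnto.lipschitz.dimH_image_le S

end InnerProductSpace

/-- **Hausdorff dimension of the secant direction set**: if `H : ℝ^n → ℝ^D` is injective
and locally Lipschitz, the set of normalized secant directions
`s(x,y) = (H x − H y)/‖H x − H y‖` has Hausdorff dimension at most `2n`; in particular if
`D − 1 > 2n` it has empty interior in the unit sphere `S^{D−1}`. -/
theorem secant_directions_dimH_le {n D : ℕ}
    (H : EuclideanSpace ℝ (Fin n) → EuclideanSpace ℝ (Fin D))
    (hinj : Function.Injective H) (hlip : LocallyLipschitz H) :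
    dimH {v : EuclideanSpace ℝ (Fin D) |
        ∃ x y, x ≠ y ∧ v = ‖H x - H y‖⁻¹ • (H x - H y)} ≤ 2 * n ∧
    (2 * n < D - 1 →
      interior
        ((fun v : Metric.sphere (0 : EuclideanSpace ℝ (Fin D)) 1 => (v : EuclideanSpace ℝ (Fin D))) ⁻¹'
          {v : EuclideanSpace ℝ (Fin D) |
            ∃ x y, x ≠ y ∧ v = ‖H x - H y‖⁻¹ • (H x - H y)}) = ∅) := by
  set S := {v : EuclideanSpace ℝ (Fin D) | ∃ x y, x ≠ y ∧ v = ‖H x - H y‖⁻¹ • (H x - H y)}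
  have hS_image : S = (fun p : EuclideanSpace ℝ (Fin n) × EuclideanSpace ℝ (Fin n) => ‖H p.1 - H p.2‖⁻¹ • (H p.1 - H p.2)) '' {p | p.1 ≠ p.2} := by
    ext v
    simp [S, eq_comm]
  have hsecant : LocallyLipschitz fun p : EuclideanSpace ℝ (Fin n) × _ => H p.1 - H p.2 :=
    (hlip.comp LipschitzWith.prod_fst.locallyLipschitz).sub
      (hlip.comp LipschitzWith.prod_snd.locallyLipschitz)
  have hdim : dimH S ≤ 2 * n := by
    calc dimH S ≤ dimH {p : EuclideanSpace ℝ (Fin n) × _ | p.1 ≠ p.2} :=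
          hS_image ▸ dimH_image_inv_norm_smul_le hsecant fun p hp => sub_ne_zero.2 (hinj.ne hp)
      _ ≤ finrank ℝ (EuclideanSpace ℝ (Fin n) × EuclideanSpace ℝ (Fin n)) :=
          (dimH_mono (subset_univ _)).trans_eq (Real.dimH_univ_eq_finrank _)
      _ = 2 * n := by simp [finrank_prod, two_mul]
  refine ⟨hdim, fun hD => eq_empty_of_forall_notMem fun v hv => ?_⟩
  have hSv : S ∈ 𝓝[sphere 0 1] (v : EuclideanSpace ℝ (Fin D)) :=
    mem_of_superset (mem_nhds_subtype_iff_nhdsWithin.1 (mem_interior_iff_mem_nhds.1 hv))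
      (image_preimage_subset _ _)
  have hDn := (finrank_sub_one_le_dimH_of_mem_nhdsWithin_sphere
    (norm_eq_of_mem_sphere v) hSv).trans hdim
  rw [finrank_euclideanSpace_fin] at hDn
  exact hD.not_ge (by exact_mod_cast hDn)
end

section
/- Let D₁ ≥ 2n+2 with n ≥ 1, and let H : ℝ^n → ℝ^{D₁} be continuous such that ℝ^n = ⋃_{j=1}^J closure(B_j) for open, pairwise disjoint sets B_1,…,B_J, and the restriction of H to each B_j is affine. Let v₁ ∈ S^{D₁−1} and let ρ, δ ∈ ℝ satisfy 0 < 8ρ ≤ δ < π. Then there exists a constant c₀ ∈ (0,1), depending only on D₁ and n, such that if ρ ≤ c₀ · J^{−2/(D₁−(2n+1))} · δ, then there exists w ∈ S^{D₁−1} with ‖w − v₁‖ < δ and ‖w − s(x,y)‖ ≥ ρ for all pairs (x,y) with x ≠ y and H(x) ≠ H(y), where s(x,y) = (H(x) − H(y))/‖H(x) − H(y)‖ and distances are measured in ℝ^{D₁}. -/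
/-!
Every difference `H x - H y`, with `x ∈ closure (B j)` and `y ∈ closure (B j')`, lies in the
subspace `range T_j + range T_j' + ℝ (b_j - b_j')` of dimension at most `2n + 1`, and so does its
normalisation. The `ρ`-neighbourhood of a `(2n+1)`-dimensional subspace meets a ball of radius
`r` in volume at most `(2r)^(2n+1) (2ρ)^(D₁-2n-1)`, so when `ρ ≤ c₀ J^(-2/(D₁-2n-1)) δ` the `J²`
neighbourhoods cannot cover the ball of radius `δ/4` around `v₁`. An uncovered point, normalised,
is the required direction `w`.
-/

open MeasureTheory Metric Module

theorem exists_pos_lt_one_pow_lt {K : ℝ} (hK : 0 < K) {q : ℕ} (hq : q ≠ 0) :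
    ∃ c : ℝ, 0 < c ∧ c < 1 ∧ c ^ q < K := by
  have h₁ := min_le_left (1 / 2 : ℝ) (K / 2)
  have h₂ := min_le_right (1 / 2 : ℝ) (K / 2)
  exact ⟨min (1 / 2) (K / 2), by positivity, by linarith,
    (pow_le_of_le_one (by positivity) (by linarith) hq).trans_lt (by linarith)⟩

theorem pow_mul_pow_sub_le_pow_mul_pow_sub {a b : ℝ} (ha : 0 ≤ a) (hab : a ≤ b) {k d D : ℕ}
    (hkd : k ≤ d) (hdD : d ≤ D) : b ^ k * a ^ (D - k) ≤ b ^ d * a ^ (D - d) := by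
  obtain ⟨i, rfl⟩ := Nat.exists_eq_add_of_le hkd
  obtain ⟨j, rfl⟩ := Nat.exists_eq_add_of_le hdD
  rw [show k + i + j - k = i + j by omega, show k + i + j - (k + i) = j by omega, pow_add,
    pow_add, mul_assoc]
  have hb : 0 ≤ b := ha.trans hab
  gcongr

section Normalize

variable {E : Type*} [NormedAddCommGroup E] [NormedSpace ℝ E]

theorem norm_inv_norm_smul_sub_le (p : E) {v : E} (hv : ‖v‖ = 1) :
    ‖‖p‖⁻¹ • p - v‖ ≤ 2 * ‖p - v‖ := by
  have hp : ‖‖p‖⁻¹ • p - p‖ ≤ ‖p - v‖ := by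
    rcases eq_or_ne p 0 with rfl | hp
    · simp
    have hp' : 0 < ‖p‖ := norm_pos_iff.2 hp
    calc ‖‖p‖⁻¹ • p - p‖ = |‖p‖ - ‖v‖| := by
          rw [show ‖p‖⁻¹ • p - p = (‖p‖⁻¹ - 1) • p by rw [sub_smul, one_smul], norm_smul,
            Real.norm_eq_abs, hv, ← abs_of_pos hp', ← abs_mul, abs_of_pos hp', sub_mul,
            inv_mul_cancel₀ hp'.ne', one_mul, abs_sub_comm]
      _ ≤ ‖p - v‖ := abs_norm_sub_norm_le p v
  calc ‖‖p‖⁻¹ • p - v‖ ≤ ‖‖p‖⁻¹ • p - p‖ + ‖p - v‖ := norm_sub_le_norm_sub_add_norm_sub _ _ _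
    _ ≤ 2 * ‖p - v‖ := by linarith

theorem le_norm_inv_norm_smul_sub {L : Submodule ℝ E} {p s : E} {c ρ : ℝ} (hp : p ≠ 0)
    (hρ : 0 ≤ ρ) (hpc : ‖p‖ ≤ c) (hfar : ∀ t ∈ L, c * ρ ≤ ‖p - t‖) (hs : s ∈ L) :
    ρ ≤ ‖‖p‖⁻¹ • p - s‖ := by
  have hp' : 0 < ‖p‖ := norm_pos_iff.2 hp
  have : ‖p‖⁻¹ • p - s = ‖p‖⁻¹ • (p - ‖p‖ • s) := by
    rw [smul_sub, smul_smul, inv_mul_cancel₀ hp'.ne', one_smul]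
  rw [this, norm_smul, norm_inv, norm_norm, inv_mul_eq_div, le_div_iff₀ hp']
  calc ρ * ‖p‖ ≤ c * ρ := by nlinarith
    _ ≤ ‖p - ‖p‖ • s‖ := hfar _ (L.smul_mem _ hs)

end Normalize

section Volume

variable {E : Type*} [NormedAddCommGroup E] [InnerProductSpace ℝ E] [FiniteDimensional ℝ E]
  [MeasurableSpace E] [BorelSpace E]

theorem volume_ball_le_two_mul_pow_finrank (x : E) (r : ℝ) :
    volume (ball x r) ≤ ENNReal.ofReal ((2 * r) ^ finrank ℝ E) := by
  rcases le_or_gt r 0 with hr | hr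
  · simp [ball_eq_empty.2 hr]
  set b := stdOrthonormalBasis ℝ E
  -- in orthonormal coordinates the Euclidean ball lies in the sup-norm ball, a cube of side `2r`
  let e : E → Fin (finrank ℝ E) → ℝ := WithLp.ofLp ∘ b.repr
  have he : MeasurePreserving e := (PiLp.volume_preserving_ofLp _).comp b.measurePreserving_repr
  have hsub : ball x r ⊆ e ⁻¹' ball (e x) r := fun y hy =>
    (((PiLp.lipschitzWith_ofLp 2 _).comp b.repr.isometry.lipschitz).dist_le_mul y x).trans_lt
      (by simpa using hy)
  calc volume (ball x r) ≤ volume (e ⁻¹' ball (e x) r) := measure_mono hsub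
    _ = ENNReal.ofReal ((2 * r) ^ finrank ℝ E) := by
      rw [he.measure_preimage measurableSet_ball.nullMeasurableSet, Real.volume_pi_ball _ hr,
        Fintype.card_fin]

theorem volume_ball_inter_thickening_le (L : Submodule ℝ E) (v : E) (r ρ : ℝ) :
    volume (ball v r ∩ thickening ρ (L : Set E)) ≤
      ENNReal.ofReal ((2 * r) ^ finrank ℝ L) *
        ENNReal.ofReal ((2 * ρ) ^ (finrank ℝ E - finrank ℝ L)) := by
  let e : E → L × Lᗮ := WithLp.ofLp ∘ L.orthogonalDecomposition
  have he : MeasurePreserving e :=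
    (WithLp.volume_preserving_ofLp L Lᗮ).comp L.orthogonalDecomposition.measurePreserving
  have hsub : ball v r ∩ thickening ρ (L : Set E) ⊆
      e ⁻¹' (ball (L.orthogonalProjectionOnto v) r ×ˢ ball 0 ρ) := by
    rintro x ⟨hxv, hxL⟩
    obtain ⟨s, hs, hxs⟩ := mem_thickening_iff.1 hxL
    simp only [e, Function.comp_apply, L.orthogonalDecomposition_apply, Set.mem_preimage,
      Set.mem_prod, mem_ball, dist_eq_norm, sub_zero] at hxv hxs ⊢
    constructor
    · rw [← map_sub]
      exact (L.norm_orthogonalProjectionOnto_apply_le _).trans_lt hxv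
    · have : Lᗮ.orthogonalProjectionOnto x = Lᗮ.orthogonalProjectionOnto (x - s) := by
        rw [map_sub, Submodule.orthogonalProjectionOnto_orthogonal_apply_eq_zero hs, sub_zero]
      rw [this]
      exact (Lᗮ.norm_orthogonalProjectionOnto_apply_le _).trans_lt hxs
  have hrank : finrank ℝ Lᗮ = finrank ℝ E - finrank ℝ L := by
    have := L.finrank_add_finrank_orthogonal
    omega
  calc volume (ball v r ∩ thickening ρ (L : Set E))
      ≤ volume (e ⁻¹' (ball (L.orthogonalProjectionOnto v) r ×ˢ ball 0 ρ)) := measure_mono hsub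
    _ = volume (ball (L.orthogonalProjectionOnto v) r) * volume (ball (0 : Lᗮ) ρ) := by
      rw [he.measure_preimage (measurableSet_ball.prod measurableSet_ball).nullMeasurableSet,
        Measure.volume_eq_prod, Measure.prod_prod]
    _ ≤ _ := by
      rw [← hrank]
      gcongr <;> exact volume_ball_le_two_mul_pow_finrank _ _

theorem exists_norm_sub_lt_forall_le_norm_sub {ι : Type*} [Fintype ι] (L : ι → Submodule ℝ E)
    {d : ℕ} (hL : ∀ i, finrank ℝ (L i) ≤ d) (hd : d ≤ finrank ℝ E) (v : E) {r ρ : ℝ}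
    (hr : 0 < r) (hρ : 0 ≤ ρ) (hρr : ρ ≤ r)
    (hcount : Fintype.card ι * ((2 * r) ^ d * (2 * ρ) ^ (finrank ℝ E - d)) <
      r ^ finrank ℝ E * (volume (ball (0 : E) 1)).toReal) :
    ∃ p : E, ‖p - v‖ < r ∧ ∀ i, ∀ s ∈ L i, ρ ≤ ‖p - s‖ := by
  by_contra! hcover
  have hsub : ball v r ⊆ ⋃ i, ball v r ∩ thickening ρ (L i : Set E) := fun p hp => by
    obtain ⟨i, s, hs, hps⟩ := hcover p (mem_ball_iff_norm.1 hp)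
    exact Set.mem_iUnion.2 ⟨i, hp, mem_thickening_iff.2 ⟨s, hs, by rwa [dist_eq_norm]⟩⟩
  have htube : ∀ i, volume (ball v r ∩ thickening ρ (L i : Set E)) ≤
      ENNReal.ofReal ((2 * r) ^ d * (2 * ρ) ^ (finrank ℝ E - d)) := fun i => by
    refine (volume_ball_inter_thickening_le (L i) v r ρ).trans ?_
    rw [← ENNReal.ofReal_mul (by positivity)]
    exact ENNReal.ofReal_le_ofReal
      (pow_mul_pow_sub_le_pow_mul_pow_sub (by positivity) (by linarith) (hL i) hd)
  have hball : volume (ball v r) =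
      ENNReal.ofReal (r ^ finrank ℝ E * (volume (ball (0 : E) 1)).toReal) := by
    rw [Measure.addHaar_ball_of_pos _ _ hr, ENNReal.ofReal_mul (by positivity),
      ENNReal.ofReal_toReal measure_ball_lt_top.ne]
  have := calc volume (ball v r)
      ≤ ∑ i, volume (ball v r ∩ thickening ρ (L i : Set E)) :=
        (measure_mono hsub).trans (measure_iUnion_fintype_le _ _)
    _ ≤ ∑ _i : ι, ENNReal.ofReal ((2 * r) ^ d * (2 * ρ) ^ (finrank ℝ E - d)) :=
        Finset.sum_le_sum fun i _ => htube i
    _ = ENNReal.ofReal (Fintype.card ι * ((2 * r) ^ d * (2 * ρ) ^ (finrank ℝ E - d))) := by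
        rw [Finset.sum_const, Finset.card_univ, nsmul_eq_mul,
          ENNReal.ofReal_mul (Nat.cast_nonneg _), ENNReal.ofReal_natCast]
  rw [hball, ENNReal.ofReal_le_ofReal_iff (by positivity)] at this
  linarith

end Volume

section Secant

variable {K V W : Type*} [Field K] [AddCommGroup V] [Module K V] [AddCommGroup W] [Module K W]

def secantSubspace (T T' : V →ₗ[K] W) (c : W) : Submodule K W :=
  LinearMap.range T ⊔ LinearMap.range T' ⊔ K ∙ c

theorem finrank_secantSubspace_le [FiniteDimensional K V] (T T' : V →ₗ[K] W) (c : W) :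
    finrank K (secantSubspace T T' c) ≤ 2 * finrank K V + 1 := by
  have hc : finrank K (K ∙ c) ≤ 1 := by simpa using finrank_span_le_card ({c} : Set W)
  calc finrank K (secantSubspace T T' c)
      ≤ finrank K (LinearMap.range T) + finrank K (LinearMap.range T') + finrank K (K ∙ c) :=
        (Submodule.finrank_add_le_finrank_add_finrank _ _).trans
          (Nat.add_le_add_right (Submodule.finrank_add_le_finrank_add_finrank _ _) _)
    _ ≤ finrank K V + finrank K V + 1 := by
        gcongr
        exacts [T.finrank_range_le, T'.finrank_range_le]
    _ = 2 * finrank K V + 1 := by ring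

theorem add_sub_add_mem_secantSubspace (T T' : V →ₗ[K] W) (b b' : W) (x y : V) :
    (T x + b) - (T' y + b') ∈ secantSubspace T T' (b - b') := by
  rw [show T x + b - (T' y + b') = (T x - T' y) + (b - b') by abel]
  exact add_mem (Submodule.mem_sup_left (sub_mem (Submodule.mem_sup_left ⟨x, rfl⟩)
    (Submodule.mem_sup_right ⟨y, rfl⟩)))
    (Submodule.mem_sup_right (Submodule.mem_span_singleton_self _))

end Secant

theorem exists_sub_mem_secantSubspace {ι V W : Type*} [NormedAddCommGroup V] [NormedSpace ℝ V]
    [FiniteDimensional ℝ V] [NormedAddCommGroup W] [NormedSpace ℝ W] {B : ι → Set V}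
    (hcover : ⋃ j, closure (B j) = Set.univ) {H : V → W} (hH : Continuous H)
    {T : ι → V →ₗ[ℝ] W} {b : ι → W} (hTb : ∀ j, ∀ x ∈ B j, H x = T j x + b j) (x y : V) :
    ∃ j j', H x - H y ∈ secantSubspace (T j) (T j') (b j - b j') := by
  have hclosure (j : ι) : ∀ z ∈ closure (B j), H z = T j z + b j :=
    Set.EqOn.closure (hTb j) hH ((T j).continuous_of_finiteDimensional.add continuous_const)
  obtain ⟨j, hx⟩ := Set.mem_iUnion.1 (hcover ▸ Set.mem_univ x)
  obtain ⟨j', hy⟩ := Set.mem_iUnion.1 (hcover ▸ Set.mem_univ y)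
  refine ⟨j, j', ?_⟩
  rw [hclosure j x hx, hclosure j' y hy]
  exact add_sub_add_mem_secantSubspace _ _ _ _ x y

theorem count_mul_tube_bound_lt_ball_bound {J m q : ℕ} (hq : q ≠ 0) {ω c₀ ρ δ : ℝ} (hc₀ : 0 ≤ c₀)
    (hc₀ω : c₀ ^ q < ω / (2 ^ m * 16 ^ q)) (hρ : 0 ≤ ρ) (hδ : 0 < δ)
    (hρδ : ρ ≤ c₀ * (J : ℝ) ^ (-(2 / (q : ℝ))) * δ) :
    (J * J : ℝ) * ((2 * (δ / 4)) ^ m * (2 * (2 * ρ)) ^ q) < (δ / 4) ^ (m + q) * ω := by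
  have hω : 0 < ω := by
    have := (pow_nonneg hc₀ q).trans_lt hc₀ω
    rwa [div_pos_iff_of_pos_right (by positivity)] at this
  rcases J.eq_zero_or_pos with rfl | hJ
  · simp only [Nat.cast_zero, zero_mul]
    positivity
  set A := (J : ℝ) ^ (-(2 / (q : ℝ)))
  have hJA : (J * J : ℝ) * A ^ q = 1 := by
    rw [← Real.rpow_mul_natCast (Nat.cast_nonneg _), neg_mul,
      div_mul_cancel₀ _ (by exact_mod_cast hq), Real.rpow_neg (Nat.cast_nonneg _), Real.rpow_two]
    field_simp
  calc (J * J : ℝ) * ((2 * (δ / 4)) ^ m * (2 * (2 * ρ)) ^ q)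
      ≤ (J * J : ℝ) * ((2 * (δ / 4)) ^ m * (2 * (2 * (c₀ * A * δ))) ^ q) := by gcongr
    _ = ((J * J : ℝ) * A ^ q) * c₀ ^ q * ((δ / 2) ^ m * (4 * δ) ^ q) := by ring
    _ < ω / (2 ^ m * 16 ^ q) * ((δ / 2) ^ m * (4 * δ) ^ q) := by
        rw [hJA, one_mul]
        gcongr
    _ = (δ / 4) ^ (m + q) * ω := by
        rw [show δ / 2 = δ / 4 * 2 by ring, show 4 * δ = δ / 4 * 16 by ring, mul_pow, mul_pow,
          pow_add]
        field_simp

theorem exists_direction_avoiding_secants_general (n D₁ : ℕ) (hD : 2 * n + 2 ≤ D₁) :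
    ∃ c₀ : ℝ, 0 < c₀ ∧ c₀ < 1 ∧
      ∀ (J : ℕ) (B : Fin J → Set (EuclideanSpace ℝ (Fin n)))
        (H : EuclideanSpace ℝ (Fin n) → EuclideanSpace ℝ (Fin D₁)),
        Continuous H →
        (∀ j, IsOpen (B j)) →
        (Pairwise fun j j' => Disjoint (B j) (B j')) →
        (⋃ j, closure (B j)) = Set.univ →
        (∀ j, ∃ (T : EuclideanSpace ℝ (Fin n) →ₗ[ℝ] EuclideanSpace ℝ (Fin D₁))
          (b : EuclideanSpace ℝ (Fin D₁)), ∀ x ∈ B j, H x = T x + b) →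
        ∀ (v₁ : EuclideanSpace ℝ (Fin D₁)), ‖v₁‖ = 1 →
        ∀ ρ δ : ℝ, 0 < ρ → 8 * ρ ≤ δ → δ < Real.pi →
        ρ ≤ c₀ * (J : ℝ) ^ (-(2 / ((D₁ : ℝ) - (2 * n + 1)))) * δ →
        ∃ w : EuclideanSpace ℝ (Fin D₁), ‖w‖ = 1 ∧ ‖w - v₁‖ < δ ∧
          ∀ x y, x ≠ y → H x ≠ H y →
            ρ ≤ ‖w - ‖H x - H y‖⁻¹ • (H x - H y)‖ := by
  obtain ⟨q, rfl⟩ := Nat.exists_eq_add_of_le (show 2 * n + 1 ≤ D₁ by omega)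
  have hq : q ≠ 0 := by omega
  set ω := (volume (ball (0 : EuclideanSpace ℝ (Fin (2 * n + 1 + q))) 1)).toReal
  have hω : 0 < ω := ENNReal.toReal_pos (measure_ball_pos _ _ one_pos).ne' measure_ball_lt_top.ne
  obtain ⟨c₀, hc₀, hc₀1, hc₀K⟩ :=
    exists_pos_lt_one_pow_lt (K := ω / (2 ^ (2 * n + 1) * 16 ^ q)) (by positivity) hq
  refine ⟨c₀, hc₀, hc₀1, ?_⟩
  intro J B H hH _ _ hcover haff v₁ hv₁ ρ δ hρ h8ρ hδπ hρc
  choose T b hTb using haff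
  have hδ : 0 < δ := by linarith
  rw [show ((2 * n + 1 + q : ℕ) : ℝ) - (2 * n + 1) = q by push_cast; ring] at hρc
  -- Ball radius `δ / 4 < 1` keeps `p ≠ 0`, and normalising at most doubles `‖p - v₁‖`; as
  -- `‖p‖ ≤ 2`, distance `2ρ` from the secant subspaces becomes `ρ` after normalising.
  obtain ⟨p, hpv, hpfar⟩ := exists_norm_sub_lt_forall_le_norm_sub
    (fun i : Fin J × Fin J => secantSubspace (T i.1) (T i.2) (b i.1 - b i.2))
    (fun i => by simpa using finrank_secantSubspace_le (T i.1) (T i.2) (b i.1 - b i.2))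
    (by simp) v₁ (r := δ / 4) (ρ := 2 * ρ) (by positivity) (by positivity) (by linarith)
    (by simpa using count_mul_tube_bound_lt_ball_bound hq hc₀.le hc₀K hρ.le hδ hρc)
  have hπ := Real.pi_lt_four
  have hp : p ≠ 0 := by
    rintro rfl
    rw [zero_sub, norm_neg, hv₁] at hpv
    linarith
  have hp2 : ‖p‖ ≤ 2 := by linarith [norm_le_norm_add_norm_sub' p v₁]
  refine ⟨‖p‖⁻¹ • p, norm_smul_inv_norm hp,
    (norm_inv_norm_smul_sub_le p hv₁).trans_lt (by linarith), fun x y _ _ => ?_⟩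
  obtain ⟨j, j', hxy⟩ := exists_sub_mem_secantSubspace hcover hH hTb x y
  exact le_norm_inv_norm_smul_sub hp hρ.le hp2 (hpfar (j, j')) (Submodule.smul_mem _ _ hxy)

/-- **Avoiding secant directions of piecewise affine maps** (sphere packing lemma):
for `D₁ ≥ 2n+2`, `n ≥ 1`, there is a constant `c₀ ∈ (0,1)` depending only on `D₁` and `n`
such that, for every continuous `H : ℝ^n → ℝ^{D₁}` that is affine on each of `J` open
disjoint pieces whose closures cover `ℝ^n`, every unit vector `v₁`, and all
`0 < 8ρ ≤ δ < π` with `ρ ≤ c₀ · J^{−2/(D₁−(2n+1))} · δ`, there is a unit vector `w` with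
`‖w − v₁‖ < δ` that stays at distance `≥ ρ` from all normalized secant directions of `H`. -/
theorem exists_direction_avoiding_secants (n D₁ : ℕ) (hn : 1 ≤ n) (hD : 2 * n + 2 ≤ D₁) :
    ∃ c₀ : ℝ, 0 < c₀ ∧ c₀ < 1 ∧
      ∀ (J : ℕ) (B : Fin J → Set (EuclideanSpace ℝ (Fin n)))
        (H : EuclideanSpace ℝ (Fin n) → EuclideanSpace ℝ (Fin D₁)),
        Continuous H →
        (∀ j, IsOpen (B j)) →
        (Pairwise fun j j' => Disjoint (B j) (B j')) →
        (⋃ j, closure (B j)) = Set.univ →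
        (∀ j, ∃ (T : EuclideanSpace ℝ (Fin n) →ₗ[ℝ] EuclideanSpace ℝ (Fin D₁))
          (b : EuclideanSpace ℝ (Fin D₁)), ∀ x ∈ B j, H x = T x + b) →
        ∀ (v₁ : EuclideanSpace ℝ (Fin D₁)), ‖v₁‖ = 1 →
        ∀ ρ δ : ℝ, 0 < ρ → 8 * ρ ≤ δ → δ < Real.pi →
        ρ ≤ c₀ * (J : ℝ) ^ (-(2 / ((D₁ : ℝ) - (2 * n + 1)))) * δ →
        ∃ w : EuclideanSpace ℝ (Fin D₁), ‖w‖ = 1 ∧ ‖w - v₁‖ < δ ∧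
          ∀ x y, x ≠ y → H x ≠ H y →
            ρ ≤ ‖w - ‖H x - H y‖⁻¹ • (H x - H y)‖ :=
  exists_direction_avoiding_secants_general n D₁ hD
end

section
/- Let H : ℝ^n → ℝ^D satisfy ‖H(x) − H(y)‖ ≥ α‖x − y‖ for all x, y ∈ ℝ^n (with α > 0, so H is injective), and let w ∈ S^{D−1} be a unit vector such that ‖w − s(x,y)‖ ≥ ρ for all x ≠ y, where s(x,y) = (H(x) − H(y))/‖H(x) − H(y)‖. Define Q_w(z) = z − ⟨z, w⟩w. Then for all x, y ∈ ℝ^n: ‖Q_w(H(x)) − Q_w(H(y))‖ ≥ (1/√2)·ρ·α·‖x − y‖. -/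
/-!
Put `u = H x − H y` and `s = u / ‖u‖`. Both `s` and `−s` are secant directions, so `w` is
`ρ`-far from `±s`; for unit vectors `‖w ∓ s‖² = 2 ∓ 2⟪s, w⟫`, which gives
`ρ² / 2 ≤ 1 − |⟪s, w⟫| ≤ 1 − ⟪s, w⟫²`. Since `Q_w` is linear and
`‖Q_w u‖² = ‖u‖² (1 − ⟪s, w⟫²)`, we get `‖Q_w u‖ ≥ (ρ / √2) ‖u‖ ≥ (ρ α / √2) ‖x − y‖`.
-/

open scoped RealInnerProductSpace

section

variable {E : Type*} [NormedAddCommGroup E] [InnerProductSpace ℝ E]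

lemma sub_real_inner_smul_sub_sub_real_inner_smul (a b w : E) :
    (a - ⟪a, w⟫ • w) - (b - ⟪b, w⟫ • w) = (a - b) - ⟪a - b, w⟫ • w := by
  rw [inner_sub_left, sub_smul]
  abel

lemma norm_sub_real_inner_smul_sq {w : E} (hw : ‖w‖ = 1) (u : E) :
    ‖u - ⟪u, w⟫ • w‖ ^ 2 = ‖u‖ ^ 2 - ⟪u, w⟫ ^ 2 := by
  rw [norm_sub_sq_real, real_inner_smul_right, norm_smul, Real.norm_eq_abs, hw, real_inner_comm]
  ring_nf
  rw [sq_abs]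
  ring

lemma sq_div_two_le_one_sub_real_inner_sq {s w : E} {ρ : ℝ} (hρ : 0 ≤ ρ)
    (hs : ‖s‖ = 1) (hw : ‖w‖ = 1) (hsub : ρ ≤ ‖w - s‖) (hadd : ρ ≤ ‖w + s‖) :
    ρ ^ 2 / 2 ≤ 1 - ⟪s, w⟫ ^ 2 := by
  have hc : |⟪s, w⟫| ≤ 1 := by simpa [hs, hw] using abs_real_inner_le_norm s w
  have hsub' : ρ ^ 2 ≤ 2 - 2 * ⟪s, w⟫ := by
    have := pow_le_pow_left₀ hρ hsub 2
    rw [norm_sub_sq_real, hs, hw, real_inner_comm] at this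
    linarith
  have hadd' : ρ ^ 2 ≤ 2 + 2 * ⟪s, w⟫ := by
    have := pow_le_pow_left₀ hρ hadd 2
    rw [norm_add_sq_real, hs, hw, real_inner_comm] at this
    linarith
  -- `1 - c² ≥ 1 - |c|`, and `2 - 2|c|` is one of the two bounds above
  have hsq_le_abs : ⟪s, w⟫ ^ 2 ≤ |⟪s, w⟫| := by
    rw [← sq_abs]
    nlinarith [abs_nonneg ⟪s, w⟫]
  cases abs_cases ⟪s, w⟫ <;> linarith

lemma div_sqrt_two_mul_norm_le_norm_sub_real_inner_smul {u w : E} {ρ : ℝ} (hρ : 0 ≤ ρ)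
    (hw : ‖w‖ = 1) (hsub : ρ ≤ ‖w - ‖u‖⁻¹ • u‖) (hadd : ρ ≤ ‖w + ‖u‖⁻¹ • u‖) :
    ρ / √2 * ‖u‖ ≤ ‖u - ⟪u, w⟫ • w‖ := by
  rcases eq_or_ne u 0 with rfl | hu
  · simp
  have hs : ‖‖u‖⁻¹ • u‖ = 1 := norm_smul_inv_norm hu
  have key := sq_div_two_le_one_sub_real_inner_sq hρ hs hw hsub hadd
  rw [real_inner_smul_left] at key
  refine le_of_sq_le_sq ?_ (norm_nonneg _)
  rw [norm_sub_real_inner_smul_sq hw, mul_pow, div_pow, Real.sq_sqrt zero_le_two]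
  calc ρ ^ 2 / 2 * ‖u‖ ^ 2 ≤ (1 - (‖u‖⁻¹ * ⟪u, w⟫) ^ 2) * ‖u‖ ^ 2 := by gcongr
    _ = ‖u‖ ^ 2 - ⟪u, w⟫ ^ 2 := by
      have : ‖u‖ ≠ 0 := norm_ne_zero_iff.mpr hu
      field_simp

end

/-- **Inverse Lipschitz bound for projected maps**: if `H : ℝ^n → ℝ^D` satisfies
`‖H x − H y‖ ≥ α ‖x − y‖` and the unit vector `w` stays at distance `≥ ρ` from all
normalized secant directions `s(x,y) = (H x − H y)/‖H x − H y‖`, then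
`Q_w ∘ H` (with `Q_w z = z − ⟨z, w⟩ w`) satisfies
`‖Q_w(H x) − Q_w(H y)‖ ≥ (ρ α/√2) ‖x − y‖`. -/
theorem projected_map_inverse_lipschitz {n D : ℕ} (α ρ : ℝ) (hα : 0 < α)
    (H : EuclideanSpace ℝ (Fin n) → EuclideanSpace ℝ (Fin D))
    (hlow : ∀ x y, α * ‖x - y‖ ≤ ‖H x - H y‖)
    (w : EuclideanSpace ℝ (Fin D)) (hw : ‖w‖ = 1)
    (hfar : ∀ x y, x ≠ y → ρ ≤ ‖w - ‖H x - H y‖⁻¹ • (H x - H y)‖) :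
    ∀ x y,
      (1 / Real.sqrt 2) * ρ * α * ‖x - y‖ ≤
        ‖(H x - (inner ℝ (H x) w : ℝ) • w) - (H y - (inner ℝ (H y) w : ℝ) • w)‖ := by
  intro x y
  rcases le_or_gt ρ 0 with hρ | hρ
  · calc 1 / √2 * ρ * α * ‖x - y‖ = ρ * (α * ‖x - y‖ / √2) := by ring
      _ ≤ 0 := mul_nonpos_of_nonpos_of_nonneg hρ (by positivity)
      _ ≤ _ := norm_nonneg _
  rcases eq_or_ne x y with rfl | hxy
  · simp
  have hadd := hfar y x hxy.symm
  rw [← neg_sub (H x) (H y), norm_neg, smul_neg, sub_neg_eq_add] at hadd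
  rw [sub_real_inner_smul_sub_sub_real_inner_smul]
  calc 1 / √2 * ρ * α * ‖x - y‖ = ρ / √2 * (α * ‖x - y‖) := by ring
    _ ≤ ρ / √2 * ‖H x - H y‖ := by gcongr; exact hlow x y
    _ ≤ _ := div_sqrt_two_mul_norm_le_norm_sub_real_inner_smul hρ.le hw (hfar x y hxy) hadd
end

section
/- Let W ∈ ℝ^{m×n}, x₁, x₂ ∈ ℝ^n, and let ℓ(t) = (1−ت)x₁ + t·x₂ for t ∈ [0,1]. Let 0 = t_1 ≤ t_2 ≤ ⋯ ≤ t_{n_t} = 1 and write x_{t_k} = ℓ(t_k). Then Σ_{k=1}^{n_t−1} ‖ReLU(W x_{t_k}) − ReLU(W x_{t_{k+1}})‖₂² ≤ ‖ReLU(W x₁) − ReLU(W x₂)‖₂², and Σ_{k=1}^{n_t−1} ‖ReLU(W x_{t_k}) − ReLU(W x_{t_{k+1}})‖₂ ≤ √(n_t) · ‖ReLU(W x₁) − ReLU(W x₂)‖₂. -/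
/-- The line segment `ℓ(t) = (1−t)x₁ + t x₂`. -/
def seg {n : ℕ} (x₁ x₂ : Fin n → ℝ) (t : ℝ) : Fin n → ℝ :=
  fun i => (1 - t) * x₁ i + t * x₂ i

/-!
Along the segment, each coordinate of `W ℓ(t)` is affine in `t`, so each coordinate of
`ReLU(W ℓ(t))` is monotone or antitone in `t`. For a monotone sequence the consecutive
increments are nonnegative and telescope to the total increment, and a sum of squares of
nonnegative numbers is at most the square of their sum; summing over coordinates gives the
first inequality, and Cauchy–Schwarz turns it into the second.
-/

open Finset

theorem Fin.sum_succ_sub_castSucc {M : Type*} [AddCommGroup M] :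
    ∀ {n : ℕ} (u : Fin (n + 1) → M), ∑ k : Fin n, (u k.succ - u k.castSucc) = u (last n) - u 0
  | 0, u => by simp
  | n + 1, u => by
    rw [Fin.sum_univ_castSucc]
    simp only [Fin.succ_castSucc, Fin.succ_last]
    rw [Fin.sum_succ_sub_castSucc (fun k => u k.castSucc)]
    simp

section Increments

variable {R : Type*} [CommRing R] [LinearOrder R] [IsStrictOrderedRing R] {n : ℕ}
  {u : Fin (n + 1) → R}

theorem Monotone.sum_sq_succ_sub_castSucc_le (hu : Monotone u) :
    ∑ k : Fin n, (u k.succ - u k.castSucc) ^ 2 ≤ (u (Fin.last n) - u 0) ^ 2 := by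
  rw [← Fin.sum_succ_sub_castSucc u]
  exact sum_sq_le_sq_sum_of_nonneg fun k _ => sub_nonneg.2 (hu k.castSucc_le_succ)

theorem sum_sq_castSucc_sub_succ_le_of_monotone_or_antitone (hu : Monotone u ∨ Antitone u) :
    ∑ k : Fin n, (u k.castSucc - u k.succ) ^ 2 ≤ (u 0 - u (Fin.last n)) ^ 2 := by
  rcases hu with hu | hu
  · calc ∑ k : Fin n, (u k.castSucc - u k.succ) ^ 2
        = ∑ k : Fin n, (u k.succ - u k.castSucc) ^ 2 := sum_congr rfl fun _ _ => sub_sq_comm _ _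
      _ ≤ (u (Fin.last n) - u 0) ^ 2 := hu.sum_sq_succ_sub_castSucc_le
      _ = (u 0 - u (Fin.last n)) ^ 2 := sub_sq_comm _ _
  · simpa only [neg_sub_neg] using hu.neg.sum_sq_succ_sub_castSucc_le

end Increments

theorem sum_sum_sq_castSucc_sub_succ_le {ι : Type*} [Fintype ι] {n : ℕ}
    (v : Fin (n + 1) → ι → ℝ) (hv : ∀ j, Monotone (v · j) ∨ Antitone (v · j)) :
    ∑ k : Fin n, ∑ j, (v k.castSucc j - v k.succ j) ^ 2 ≤
      ∑ j, (v 0 j - v (Fin.last n) j) ^ 2 := by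
  rw [sum_comm]
  exact sum_le_sum fun j _ => sum_sq_castSucc_sub_succ_le_of_monotone_or_antitone (hv j)

theorem Real.sum_sqrt_le_sqrt_card_mul_sqrt_sum {ι : Type*} [Fintype ι] {f : ι → ℝ}
    (hf : ∀ i, 0 ≤ f i) : ∑ i, √(f i) ≤ √(Fintype.card ι) * √(∑ i, f i) := by
  simpa using Real.sum_sqrt_mul_sqrt_le univ (fun _ => zero_le_one) hf

theorem sum_sqrt_sum_sq_castSucc_sub_succ_le {ι : Type*} [Fintype ι] {n : ℕ}
    (v : Fin (n + 1) → ι → ℝ) (hv : ∀ j, Monotone (v · j) ∨ Antitone (v · j)) :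
    ∑ k : Fin n, √(∑ j, (v k.castSucc j - v k.succ j) ^ 2) ≤
      √n * √(∑ j, (v 0 j - v (Fin.last n) j) ^ 2) :=
  calc _ ≤ √n * √(∑ k : Fin n, ∑ j, (v k.castSucc j - v k.succ j) ^ 2) := by
        simpa using Real.sum_sqrt_le_sqrt_card_mul_sqrt_sum
          (f := fun k : Fin n => ∑ j, (v k.castSucc j - v k.succ j) ^ 2) fun k => by positivity
    _ ≤ _ := by gcongr; exact sum_sum_sq_castSucc_sub_succ_le v hv

@[simp] theorem seg_zero {n : ℕ} (x₁ x₂ : Fin n → ℝ) : seg x₁ x₂ 0 = x₁ := by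
  ext; simp [seg]

@[simp] theorem seg_one {n : ℕ} (x₁ x₂ : Fin n → ℝ) : seg x₁ x₂ 1 = x₂ := by
  ext; simp [seg]

theorem mulVec_seg {m n : ℕ} (W : Matrix (Fin m) (Fin n) ℝ) (x₁ x₂ : Fin n → ℝ) (s : ℝ) :
    W.mulVec (seg x₁ x₂ s) = seg (W.mulVec x₁) (W.mulVec x₂) s := by
  have : seg x₁ x₂ s = (1 - s) • x₁ + s • x₂ := rfl
  rw [this, Matrix.mulVec_add, Matrix.mulVec_smul, Matrix.mulVec_smul]
  rfl

theorem monotone_or_antitone_relu_seg {m : ℕ} (y₁ y₂ : Fin m → ℝ) (j : Fin m) :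
    Monotone (fun s => relu (seg y₁ y₂ s) j) ∨ Antitone (fun s => relu (seg y₁ y₂ s) j) := by
  have hseg : ∀ s, seg y₁ y₂ s j = y₁ j + s * (y₂ j - y₁ j) := fun s => by simp only [seg]; ring
  simp only [relu, hseg]
  rcases le_total (y₁ j) (y₂ j) with h | h
  · refine Or.inl (Monotone.max (fun a b hab => ?_) monotone_const)
    nlinarith
  · refine Or.inr (Antitone.max (fun a b hab => ?_) antitone_const)
    nlinarith

/-- **Co-linear additivity of `ReLU(W·)`**: for points `x_{t_k}` along the segment from
`x₁` to `x₂` with `0 = t_1 ≤ ⋯ ≤ t_{n_t} = 1` (here `n_t = nt + 1` points), the sums of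
squared (resp. plain) Euclidean distances of consecutive ReLU images are bounded by the
squared distance (resp. `√(n_t)` times the distance) of the endpoint images. -/
theorem relu_colinear_additivity {m n nt : ℕ} (W : Matrix (Fin m) (Fin n) ℝ)
    (x₁ x₂ : Fin n → ℝ) (t : Fin (nt + 1) → ℝ) (hmono : Monotone t)
    (h0 : t 0 = 0) (h1 : t (Fin.last nt) = 1) :
    (∑ k : Fin nt, ∑ j,
        (relu (W.mulVec (seg x₁ x₂ (t k.castSucc))) j
          - relu (W.mulVec (seg x₁ x₂ (t k.succ))) j) ^ 2)
      ≤ ∑ j, (relu (W.mulVec x₁) j - relu (W.mulVec x₂) j) ^ 2 ∧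
    (∑ k : Fin nt, Real.sqrt (∑ j,
        (relu (W.mulVec (seg x₁ x₂ (t k.castSucc))) j
          - relu (W.mulVec (seg x₁ x₂ (t k.succ))) j) ^ 2))
      ≤ Real.sqrt (nt + 1) *
          Real.sqrt (∑ j, (relu (W.mulVec x₁) j - relu (W.mulVec x₂) j) ^ 2) := by
  have hv : ∀ j, Monotone (fun k => relu (W.mulVec (seg x₁ x₂ (t k))) j) ∨
      Antitone (fun k => relu (W.mulVec (seg x₁ x₂ (t k))) j) := fun j => by
    simp only [mulVec_seg]
    exact (monotone_or_antitone_relu_seg _ _ j).imp (·.comp hmono) (·.comp_monotone hmono)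
  have hsq := sum_sum_sq_castSucc_sub_succ_le _ hv
  have hsqrt := sum_sqrt_sum_sq_castSucc_sub_succ_le _ hv
  simp only [h0, h1, seg_zero, seg_one] at hsq hsqrt
  exact ⟨hsq, hsqrt.trans <|
    mul_le_mul_of_nonneg_right (Real.sqrt_le_sqrt (by linarith)) (Real.sqrt_nonneg _)⟩
end
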